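/- arXiv:1503.03785 — 5 statements merged into one kernel-verified Lean document; each statement's English description precedes it below -/
import Mathlib

section
/- Let A = ((a_n, r_n))_{n≥0} be an abstract Swiss cheese with δ₁(A) > 0. Then there exists a classical abstract Swiss cheese B such that X_B ⊆ X_A and δ₁(B) ≥ δ₁(A). (Feinstein–Heath classicalisation theorem.) -/
open Metric Set Filter Topology ENNReal

noncomputable section

/-- Abstract Swiss cheese space `F = (ℂ × [0,∞))^{ℕ₀}` with the product topology. -/
abbrev ASC := ℕ → ℂ × NNReal

/-- The centre of the `n`-th disk. -/
def ctr (A : ASC) (n : ℕ) : ℂ := (A n).1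

/-- The radius of the `n`-th disk, as a real number. -/
def rad (A : ASC) (n : ℕ) : ℝ := ((A n).2 : ℝ)

/-- The associated Swiss cheese set `X_A`. -/
def Xset (A : ASC) : Set ℂ :=
  closedBall (ctr A 0) (rad A 0) \ ⋃ n : ℕ, ball (ctr A (n + 1)) (rad A (n + 1))

/-- The significant index set `S_A = {n ≥ 1 : r_n > 0}`. -/
def SIdx (A : ASC) : Set ℕ := {n | 1 ≤ n ∧ 0 < rad A n}

/-- The radius sum function `ρ(A) = ∑_{n≥1} r_n`, valued in `[0,∞]`. -/
def rhoSum (A : ASC) : ℝ≥0∞ := ∑' n : ℕ, ((A (n + 1)).2 : ℝ≥0∞)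

/-- The centre bound function `μ(A) = sup_{n≥1} |a_n|`, valued in `[0,∞]`. -/
def muSup (A : ASC) : ℝ≥0∞ := ⨆ n : ℕ, (‖(A (n + 1)).1‖₊ : ℝ≥0∞)

/-- `H_A(E) = {n ∈ S_A : B̄(a_n, r_n) ∩ E ≠ ∅}`. -/
def HIdx (A : ASC) (E : Set ℂ) : Set ℕ :=
  {n | n ∈ SIdx A ∧ (closedBall (ctr A n) (rad A n) ∩ E).Nonempty}

/-- The local radius sum function `ρ_E(A) = ∑_{n ∈ H_A(E)} r_n`. -/
def rhoLoc (A : ASC) (E : Set ℂ) : ℝ≥0∞ :=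
  ∑' n : HIdx A E, ((A (n : ℕ)).2 : ℝ≥0∞)

/-- The discrepancy function of order 1, `δ₁(A) = r_0 − ∑_{n≥1} r_n ∈ [−∞,∞)`. -/
def delta1 (A : ASC) : EReal := (rad A 0 : EReal) - ((rhoSum A : ℝ≥0∞) : EReal)

/-- The discrepancy function of order `α`, `δ_α(A) = r_0^α − ∑_{n≥1} r_n^α ∈ [−∞,∞)`. -/
def deltaAlpha (α : ℝ) (A : ASC) : EReal :=
  ((((A 0).2 : ℝ≥0∞) ^ α : ℝ≥0∞) : EReal) -
    ((∑' n : ℕ, ((A (n + 1)).2 : ℝ≥0∞) ^ α : ℝ≥0∞) : EReal)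

/-- The discrepancy function of order 2. -/
def delta2 (A : ASC) : EReal := deltaAlpha 2 A

/-- `A` is classical. -/
def IsClassicalASC (A : ASC) : Prop :=
  rhoSum A < ⊤ ∧ 0 < rad A 0 ∧
  ∀ k ∈ SIdx A,
    closedBall (ctr A k) (rad A k) ⊆ ball (ctr A 0) (rad A 0) ∧
    ∀ l ∈ SIdx A, l ≠ k →
      closedBall (ctr A k) (rad A k) ∩ closedBall (ctr A l) (rad A l) = ∅

/-- `A` is semiclassical. -/
def IsSemiclassicalASC (A : ASC) : Prop :=
  rhoSum A < ⊤ ∧ 0 < rad A 0 ∧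
  ∀ k ∈ SIdx A,
    ball (ctr A k) (rad A k) ⊆ ball (ctr A 0) (rad A 0) ∧
    ∀ l ∈ SIdx A, l ≠ k →
      ball (ctr A k) (rad A k) ∩ ball (ctr A l) (rad A l) = ∅

/-- Membership in `N`: finite radius sum and `(r_n)_{n≥1}` non-increasing. -/
def memN (A : ASC) : Prop :=
  rhoSum A < ⊤ ∧ ∀ n : ℕ, 1 ≤ n → (A (n + 1)).2 ≤ (A n).2

/-- Membership in `N(M,R)`. -/
def memNMR (M R : ℝ≥0∞) (A : ASC) : Prop := memN A ∧ muSup A ≤ M ∧ rhoSum A ≤ R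

/-- `A` is redundancy-free. -/
def RedundancyFree (A : ASC) : Prop :=
  ∀ k ∈ SIdx A,
    (ball (ctr A k) (rad A k) ∩ closedBall (ctr A 0) (rad A 0)).Nonempty ∧
    ∀ l ∈ SIdx A, l ≠ k → ¬ ball (ctr A k) (rad A k) ⊆ ball (ctr A l) (rad A l)

/-- `B` is partially above `A`. -/
def PartiallyAbove (B A : ASC) : Prop :=
  closedBall (ctr B 0) (rad B 0) ⊆ closedBall (ctr A 0) (rad A 0) ∧
  ∀ n : ℕ, 1 ≤ n →
    ball (ctr A n) (rad A n) ⊆ (closedBall (ctr B 0) (rad B 0))ᶜ ∨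
    ∃ m : ℕ, 1 ≤ m ∧ ball (ctr A n) (rad A n) ⊆ ball (ctr B m) (rad B m)

/-- The set `S̃` of all `B ∈ N(μ(A), ρ(A))` partially above `A`. -/
def Stilde (A : ASC) : Set ASC :=
  {B | memNMR (muSup A) (rhoSum A) B ∧ PartiallyAbove B A}

/-- `S₁`: the elements of `S̃` on which `δ₁` attains its supremum over `S̃`. -/
def S1 (A : ASC) : Set ASC :=
  {B ∈ Stilde A | delta1 B = sSup (delta1 '' Stilde A)}

/-- `S₂`: the elements of `S₁` on which `δ₂` attains its infimum over `S₁`. -/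
def S2 (A : ASC) : Set ASC :=
  {B ∈ S1 A | delta2 B = sInf (delta2 '' S1 A)}

/-- The (classical) error set `E(A)`. -/
def errSet (A : ASC) : Set ℂ :=
  (⋃ m ∈ SIdx A, ⋃ n ∈ SIdx A, ⋃ (_ : m ≠ n),
    closedBall (ctr A m) (rad A m) ∩ closedBall (ctr A n) (rad A n)) ∪
  ⋃ n ∈ SIdx A, (ball (ctr A 0) (rad A 0))ᶜ ∩ closedBall (ctr A n) (rad A n)

/-- `V(C) = ⋃_{n∈I} U_n`. -/
def VC (I : Set ℕ) (U : ℕ → Set ℂ) : Set ℂ := ⋃ n ∈ I, U n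

/-- `F(C) = ⋃_{n∈I} K_n`. -/
def FC (I : Set ℕ) (K : ℕ → Set ℂ) : Set ℂ := ⋃ n ∈ I, K n

/-- The set `L_A(C)` for a controlling collection `C = ((K_n, U_n))_{n∈I}`. -/
def LSet (A : ASC) (I : Set ℕ) (K U : ℕ → Set ℂ) : Set ASC :=
  {B | memNMR (muSup A) (rhoSum A) B ∧
    (∀ n ∈ I, rhoLoc B (U n) ≤ rhoLoc A (U n)) ∧
    closedBall (ctr B 0) (rad B 0) = closedBall (ctr A 0) (rad A 0) ∧
    (∀ k ∈ SIdx A, closedBall (ctr A k) (rad A k) ∩ VC I U = ∅ →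
      ∃ l ∈ SIdx B, ball (ctr B l) (rad B l) = ball (ctr A k) (rad A k)) ∧
    (∀ n ∈ I, ∀ k ∈ SIdx A, (closedBall (ctr A k) (rad A k) ∩ U n).Nonempty →
      (∃ l ∈ SIdx B, ball (ctr B l) (rad B l) = ball (ctr A k) (rad A k)) ∨
      (∃ l ∈ HIdx B (K n), ball (ctr A k) (rad A k) ⊆ ball (ctr B l) (rad B l)))}

/-- `A` is annular: `a_0 = a_1` and `0 < r_1 < r_0`. -/
def Annular (A : ASC) : Prop := ctr A 0 = ctr A 1 ∧ 0 < rad A 1 ∧ rad A 1 < rad A 0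

/-- The annular radius sum `ρ_a(A) = ∑_{n≥2} r_n`. -/
def rhoAnn (A : ASC) : ℝ≥0∞ := ∑' n : ℕ, ((A (n + 2)).2 : ℝ≥0∞)

/-- The annular discrepancy `δ_a(A) = r_0 − r_1 − 2ρ_a(A)`. -/
def deltaAnn (A : ASC) : EReal :=
  ((rad A 0 - rad A 1 : ℝ) : EReal) - ((2 * rhoAnn A : ℝ≥0∞) : EReal)

/-- The family `Ã` of Lemma 6.4 / Theorem 6.6 (annular classicalisation). -/
def ATilde (A : ASC) : Set ASC :=
  {B | (∀ n : ℕ, 2 ≤ n → (B (n + 1)).2 ≤ (B n).2) ∧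
    rhoAnn B ≤ rhoAnn A ∧ muSup B ≤ muSup A ∧ PartiallyAbove B A ∧
    ctr B 0 = ctr A 0 ∧ ctr B 1 = ctr A 0 ∧
    rad A 1 ≤ rad B 1 ∧ rad B 1 ≤ rad B 0 ∧ rad B 0 ≤ rad A 0}

/-!
Fix `d = δ₁(A) > 0` and call `B` admissible for `A` when its outer disk lies in `B̄(a₀, r₀)`,
`δ₁(B) ≥ d`, and every disk of `A` meeting `B̄(a₀, r₀)` lies inside a disk of `B` or outside the
outer disk of `B`; then `X_B ⊆ X_A`. Admissible cheeses (with bounded centres) form a nonempty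
compact subset of `(ℂ × [0,∞))^ℕ`, on which `δ₁ - ε δ₂` is upper semicontinuous, so it has a
maximiser `B`. This `B` is classical: two meeting closed disks could be merged into one disk with
the sum of their radii, and a disk whose closure is not inside the open outer disk could be
deleted while the outer disk loses its radius and moves away from it. Both moves keep
admissibility and strictly increase `δ₁ - ε δ₂`.
-/

theorem Summable.congr_of_eq_off_finset {ι : Type*} {f g : ι → ℝ} (hg : Summable g)
    (s : Finset ι) (h : ∀ i ∉ s, f i = g i) : Summable f :=
  hg.congr_cofinite <| by
    filter_upwards [s.eventually_cofinite_notMem] with i hi using (h i hi).symm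

theorem tsum_sub_tsum_eq_sum_sub {ι : Type*} {f g : ι → ℝ} (hg : Summable g)
    (s : Finset ι) (h : ∀ i ∉ s, f i = g i) :
    ∑' i, f i - ∑' i, g i = ∑ i ∈ s, (f i - g i) := by
  rw [← (hg.congr_of_eq_off_finset s h).tsum_sub hg]
  exact tsum_eq_sum fun i hi => sub_eq_zero.2 (h i hi)

theorem lowerSemicontinuousOn_tsum_of_nonneg {α : Type*} [TopologicalSpace α] {f : ℕ → α → ℝ}
    {s : Set α} (hf : ∀ n, ContinuousOn (f n) s) (hf0 : ∀ n, ∀ x ∈ s, 0 ≤ f n x)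
    (hfs : ∀ x ∈ s, Summable fun n => f n x) :
    LowerSemicontinuousOn (fun x => ∑' n, f n x) s := by
  intro x hx y hy
  obtain ⟨N, hN⟩ := ((hfs x hx).hasSum.tendsto_sum_nat.eventually (lt_mem_nhds hy)).exists
  have hcont : ContinuousOn (fun x => ∑ n ∈ Finset.range N, f n x) s :=
    continuousOn_finsetSum _ fun n _ => hf n
  filter_upwards [(hcont x hx).eventually (lt_mem_nhds hN), self_mem_nhdsWithin] with x' hx' hx's
  exact hx'.trans_le ((hfs x' hx's).sum_le_tsum _ fun n _ => hf0 n x' hx's)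

theorem isClosed_setOf_exists_le {X : Type*} [TopologicalSpace X] {p : ℕ → X → Prop} (n : ℕ)
    (hp : ∀ m, IsClosed {x | p m x}) : IsClosed {x | ∃ m ≤ n, p m x} := by
  convert (finite_Iic n).isClosed_biUnion fun m _ => hp m using 1
  ext
  simp

theorem exists_mem_segment_dist_le_dist_le {E : Type*} [NormedAddCommGroup E] [NormedSpace ℝ E]
    {p q : E} {u v : ℝ} (hu : 0 ≤ u) (hv : 0 ≤ v) (h : dist p q ≤ u + v) :
    ∃ c ∈ segment ℝ p q, dist p c ≤ u ∧ dist q c ≤ v := by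
  rcases (add_nonneg hu hv).eq_or_lt with huv | huv
  · obtain rfl : p = q := dist_le_zero.1 (huv ▸ h)
    exact ⟨p, left_mem_segment ℝ p p, by simpa using hu, by simpa using hv⟩
  have ht : 1 - u / (u + v) = v / (u + v) := by field_simp; ring
  refine ⟨AffineMap.lineMap p q (u / (u + v)), ?_, ?_, ?_⟩
  · rw [segment_eq_image_lineMap]
    exact ⟨_, ⟨by positivity, div_le_one_of_le₀ (by linarith) huv.le⟩, rfl⟩
  · rw [dist_left_lineMap, Real.norm_of_nonneg (by positivity)]
    calc u / (u + v) * dist p q ≤ u / (u + v) * (u + v) := by gcongr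
      _ = u := div_mul_cancel₀ _ huv.ne'
  · rw [dist_comm, dist_lineMap_right, ht, Real.norm_of_nonneg (by positivity)]
    calc v / (u + v) * dist p q ≤ v / (u + v) * (u + v) := by gcongr
      _ = v := div_mul_cancel₀ _ huv.ne'

theorem exists_dist_eq_and_dist_eq_add {E : Type*} [NormedAddCommGroup E] [NormedSpace ℝ E]
    {p b : E} (hpb : p ≠ b) {u : ℝ} (hu : 0 ≤ u) :
    ∃ c, dist c b = u ∧ dist c p = dist b p + u := by
  have hd : 0 < dist p b := dist_pos.2 hpb
  refine ⟨AffineMap.lineMap p b (1 + u / dist p b), ?_, ?_⟩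
  · rw [dist_lineMap_right, sub_add_cancel_left, norm_neg, Real.norm_of_nonneg (by positivity),
      div_mul_cancel₀ _ hd.ne']
  · rw [dist_lineMap_left, Real.norm_of_nonneg (by positivity), add_mul,
      div_mul_cancel₀ _ hd.ne', one_mul, dist_comm]

namespace SwissCheese

@[fun_prop]
theorem continuous_ctr (n : ℕ) : Continuous fun B : ASC => ctr B n := (continuous_apply n).fst

@[fun_prop]
theorem continuous_rad (n : ℕ) : Continuous fun B : ASC => rad B n :=
  NNReal.continuous_coe.comp (continuous_apply n).snd

theorem rad_nonneg (B : ASC) (n : ℕ) : 0 ≤ rad B n := (B n).2.coe_nonneg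

theorem rhoSum_lt_top_iff (A : ASC) : rhoSum A < ⊤ ↔ Summable fun n => rad A (n + 1) := by
  rw [lt_top_iff_ne_top, rhoSum, ENNReal.tsum_coe_ne_top_iff_summable, ← NNReal.summable_coe]
  rfl

theorem delta1_eq_of_summable {A : ASC} (h : Summable fun n => rad A (n + 1)) :
    delta1 A = ((rad A 0 - ∑' n, rad A (n + 1) : ℝ) : EReal) := by
  have hs : Summable fun n => (A (n + 1)).2 := NNReal.summable_coe.1 h
  rw [delta1, rhoSum, ← ENNReal.coe_tsum hs, EReal.coe_nnreal_eq_coe_real, NNReal.coe_tsum,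
    ← EReal.coe_sub]
  rfl

theorem summable_of_delta1_pos {A : ASC} (h : 0 < delta1 A) : Summable fun n => rad A (n + 1) := by
  rw [← rhoSum_lt_top_iff, lt_top_iff_ne_top]
  intro htop
  rw [delta1, htop] at h
  simp at h

/-- The bound `m ≤ n` in `covers` keeps the admissible cheeses a closed set (a covering disk
cannot escape to infinity in a limit); merging always into the disk of lower index preserves it. -/
structure Admissible (A : ASC) (d : ℝ) (B : ASC) : Prop where
  dist_ctr_le : ∀ n, dist (ctr B n) (ctr A 0) ≤ 2 * rad A 0
  rad_add_dist_le : rad B 0 + dist (ctr B 0) (ctr A 0) ≤ rad A 0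
  add_sum_le : ∀ N, d + ∑ n ∈ Finset.range N, rad B (n + 1) ≤ rad B 0
  covers : ∀ n, (ball (ctr A (n + 1)) (rad A (n + 1)) ∩ closedBall (ctr A 0) (rad A 0)).Nonempty →
    (∃ m ≤ n, rad A (n + 1) + dist (ctr A (n + 1)) (ctr B (m + 1)) ≤ rad B (m + 1)) ∨
      rad A (n + 1) + rad B 0 ≤ dist (ctr A (n + 1)) (ctr B 0)

theorem isClosed_setOf_admissible (A : ASC) (d : ℝ) : IsClosed {B | Admissible A d B} := by
  have hctr : IsClosed {B : ASC | ∀ n, dist (ctr B n) (ctr A 0) ≤ 2 * rad A 0} := by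
    simp only [ofPred_forall]
    exact isClosed_iInter fun n => isClosed_le (by fun_prop) continuous_const
  have hrad : IsClosed {B : ASC | rad B 0 + dist (ctr B 0) (ctr A 0) ≤ rad A 0} :=
    isClosed_le (by fun_prop) continuous_const
  have hsum : IsClosed {B : ASC | ∀ N, d + ∑ n ∈ Finset.range N, rad B (n + 1) ≤ rad B 0} := by
    simp only [ofPred_forall]
    exact isClosed_iInter fun N => isClosed_le (by fun_prop) (by fun_prop)
  have hcov : IsClosed {B : ASC | ∀ n,
      (ball (ctr A (n + 1)) (rad A (n + 1)) ∩ closedBall (ctr A 0) (rad A 0)).Nonempty →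
      (∃ m ≤ n, rad A (n + 1) + dist (ctr A (n + 1)) (ctr B (m + 1)) ≤ rad B (m + 1)) ∨
        rad A (n + 1) + rad B 0 ≤ dist (ctr A (n + 1)) (ctr B 0)} := by
    simp only [ofPred_forall, ofPred_or]
    refine isClosed_iInter fun n => isClosed_iInter fun _ => IsClosed.union ?_ ?_
    · exact isClosed_setOf_exists_le n fun m => isClosed_le (by fun_prop) (by fun_prop)
    · exact isClosed_le (by fun_prop) (by fun_prop)
  convert ((hctr.inter hrad).inter hsum).inter hcov using 1
  ext B
  exact ⟨fun ⟨h1, h2, h3, h4⟩ => ⟨⟨⟨h1, h2⟩, h3⟩, h4⟩, fun ⟨⟨⟨h1, h2⟩, h3⟩, h4⟩ => ⟨h1, h2, h3, h4⟩⟩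

namespace Admissible

variable {A B : ASC} {d : ℝ}

theorem rad_zero_le (hB : Admissible A d B) : rad B 0 ≤ rad A 0 := by
  linarith [hB.rad_add_dist_le, dist_nonneg (x := ctr B 0) (y := ctr A 0)]

theorem add_rad_succ_le (hB : Admissible A d B) (n : ℕ) : d + rad B (n + 1) ≤ rad B 0 := by
  have h := hB.add_sum_le (n + 1)
  rw [Finset.sum_range_succ] at h
  linarith [Finset.sum_nonneg fun i (_ : i ∈ Finset.range n) => rad_nonneg B (i + 1)]

theorem rad_pos (hB : Admissible A d B) (hd : 0 < d) : 0 < rad B 0 := by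
  have h := hB.add_sum_le 0
  rw [Finset.sum_range_zero, add_zero] at h
  linarith

theorem rad_le (hB : Admissible A d B) (hd : 0 ≤ d) (n : ℕ) : rad B n ≤ rad A 0 := by
  rcases n with _ | n
  · exact hB.rad_zero_le
  · linarith [hB.add_rad_succ_le n, hB.rad_zero_le]

theorem summable (hB : Admissible A d B) : Summable fun n => rad B (n + 1) :=
  summable_of_sum_range_le (c := rad B 0 - d) (fun n => rad_nonneg B _) fun N => by
    linarith [hB.add_sum_le N]

theorem add_tsum_le (hB : Admissible A d B) : d + ∑' n, rad B (n + 1) ≤ rad B 0 := by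
  have h := hB.summable.tsum_le_of_sum_range_le (c := rad B 0 - d) fun N => by
    linarith [hB.add_sum_le N]
  linarith

theorem xset_subset (hB : Admissible A d B) : Xset B ⊆ Xset A := by
  rintro z ⟨hzB, hz⟩
  have hzA : z ∈ closedBall (ctr A 0) (rad A 0) :=
    closedBall_subset_closedBall' hB.rad_add_dist_le hzB
  refine ⟨hzA, fun hzn => ?_⟩
  obtain ⟨n, hn⟩ := mem_iUnion.1 hzn
  rcases hB.covers n ⟨z, hn, hzA⟩ with ⟨m, -, hm⟩ | hout
  · exact hz (mem_iUnion.2 ⟨m, ball_subset_ball' hm hn⟩)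
  · rw [mem_ball] at hn
    rw [mem_closedBall] at hzB
    linarith [dist_triangle_left (ctr A (n + 1)) (ctr B 0) z]

end Admissible

theorem isCompact_setOf_admissible (A : ASC) {d : ℝ} (hd : 0 ≤ d) :
    IsCompact {B | Admissible A d B} := by
  refine (isCompact_univ_pi fun _ => (isCompact_closedBall (ctr A 0) (2 * rad A 0)).prod
    (isCompact_Icc (a := 0) (b := (A 0).2))).of_isClosed_subset (isClosed_setOf_admissible A d) ?_
  intro B hB n _
  exact ⟨hB.dist_ctr_le n, zero_le, NNReal.coe_le_coe.1 (hB.rad_le hd n)⟩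

open Classical in
/-- The discarded disks miss `B̄(a₀, r₀)`, so they do not affect `X_A`, but their centres may be
unbounded. -/
def trim (A : ASC) : ASC := fun n =>
  if (ball (ctr A n) (rad A n) ∩ closedBall (ctr A 0) (rad A 0)).Nonempty then A n
  else (ctr A 0, 0)

theorem trim_admissible {A : ASC} {d : ℝ} (hA : Summable fun n => rad A (n + 1)) (hd : 0 < d)
    (hdA : d + ∑' n, rad A (n + 1) ≤ rad A 0) : Admissible A d (trim A) := by
  have htsum : 0 ≤ ∑' n, rad A (n + 1) := tsum_nonneg fun n => rad_nonneg A _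
  have hrad : ∀ n, rad A n ≤ rad A 0 := by
    rintro (_ | n)
    · rfl
    · linarith [hA.le_tsum n fun j _ => rad_nonneg A (j + 1)]
  have hr0 : 0 < rad A 0 := by linarith
  have htrim : ∀ n, (ball (ctr A n) (rad A n) ∩ closedBall (ctr A 0) (rad A 0)).Nonempty →
      trim A n = A n := fun n h => if_pos h
  have htrim' : ∀ n, ¬(ball (ctr A n) (rad A n) ∩ closedBall (ctr A 0) (rad A 0)).Nonempty →
      trim A n = (ctr A 0, 0) := fun n h => if_neg h
  have htrim0 : trim A 0 = A 0 := htrim 0 ⟨ctr A 0, mem_ball_self hr0, mem_closedBall_self hr0.le⟩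
  have htrim_rad : ∀ n, rad (trim A) n ≤ rad A n := by
    intro n
    by_cases h : (ball (ctr A n) (rad A n) ∩ closedBall (ctr A 0) (rad A 0)).Nonempty
    · simp only [rad, htrim n h, le_refl]
    · simp [rad, htrim' n h]
  refine ⟨fun n => ?_, ?_, fun N => ?_, fun n hn => Or.inl ⟨n, le_rfl, ?_⟩⟩
  · by_cases h : (ball (ctr A n) (rad A n) ∩ closedBall (ctr A 0) (rad A 0)).Nonempty
    · obtain ⟨z, hz, hz0⟩ := h
      rw [mem_ball] at hz
      rw [mem_closedBall] at hz0
      rw [show ctr (trim A) n = ctr A n from congrArg Prod.fst (htrim n ⟨z, hz, hz0⟩)]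
      linarith [dist_triangle_left (ctr A n) (ctr A 0) z, hrad n]
    · simp [ctr, htrim' n h, hr0.le]
  · simp [ctr, rad, htrim0]
  · calc d + ∑ n ∈ Finset.range N, rad (trim A) (n + 1)
        ≤ d + ∑' n, rad A (n + 1) := by
          gcongr
          exact (Finset.sum_le_sum fun n _ => htrim_rad (n + 1)).trans
            (hA.sum_le_tsum _ fun n _ => rad_nonneg A _)
      _ ≤ rad (trim A) 0 := by simpa [rad, htrim0] using hdA
  · simp [ctr, rad, htrim (n + 1) hn]

def penalizedRad (ε : ℝ) (B : ASC) (n : ℕ) : ℝ := rad B n - ε * rad B n ^ 2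

/-- For summable radii this is `δ₁(B) - ε δ₂(B)`. The concave penalty makes merging two
overlapping disks, or shrinking the outer disk by a disk that sticks out of it, strictly
profitable; this replaces the paper's minimisation of `δ₂` among the maximisers of `δ₁`. -/
def objective (ε : ℝ) (B : ASC) : ℝ := penalizedRad ε B 0 - ∑' n, penalizedRad ε B (n + 1)

@[fun_prop]
theorem continuous_penalizedRad (ε : ℝ) (n : ℕ) : Continuous fun B : ASC => penalizedRad ε B n := by
  unfold penalizedRad
  fun_prop

theorem penalizedRad_le {ε : ℝ} (hε : 0 ≤ ε) (B : ASC) (n : ℕ) : penalizedRad ε B n ≤ rad B n := by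
  unfold penalizedRad
  nlinarith [sq_nonneg (rad B n)]

variable {A B : ASC} {d ε : ℝ}

theorem Admissible.penalizedRad_nonneg (hB : Admissible A d B) (hd : 0 ≤ d) (hε : 0 ≤ ε)
    (hεA : ε * rad A 0 ≤ 1) (n : ℕ) : 0 ≤ penalizedRad ε B n := by
  have h0 := rad_nonneg B n
  have h1 : ε * rad B n ≤ 1 := by nlinarith [hB.rad_le hd n]
  unfold penalizedRad
  nlinarith

theorem Admissible.summable_penalizedRad (hB : Admissible A d B) (hd : 0 ≤ d) (hε : 0 ≤ ε)
    (hεA : ε * rad A 0 ≤ 1) : Summable fun n => penalizedRad ε B (n + 1) :=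
  hB.summable.of_nonneg_of_le (fun _ => hB.penalizedRad_nonneg hd hε hεA _) fun _ =>
    penalizedRad_le hε B _

theorem upperSemicontinuousOn_objective (A : ASC) (hd : 0 ≤ d) (hε : 0 ≤ ε)
    (hεA : ε * rad A 0 ≤ 1) : UpperSemicontinuousOn (objective ε) {B | Admissible A d B} := by
  have hsum :
      LowerSemicontinuousOn (fun B => ∑' n, penalizedRad ε B (n + 1)) {B | Admissible A d B} :=
    lowerSemicontinuousOn_tsum_of_nonneg (fun n => (continuous_penalizedRad ε (n + 1)).continuousOn)
      (fun _ _ hB => hB.penalizedRad_nonneg hd hε hεA _) fun _ hB =>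
        hB.summable_penalizedRad hd hε hεA
  have h := (continuous_penalizedRad ε 0).continuousOn.upperSemicontinuousOn.add
    (continuous_neg.comp_lowerSemicontinuousOn_antitone hsum fun _ _ h => neg_le_neg h)
  simp only [Function.comp_def, ← sub_eq_add_neg] at h
  exact h

theorem exists_admissible_isMaxOn_objective (hA : Summable fun n => rad A (n + 1)) (hd : 0 < d)
    (hdA : d + ∑' n, rad A (n + 1) ≤ rad A 0) (hε : 0 ≤ ε) (hεA : ε * rad A 0 ≤ 1) :
    ∃ B, Admissible A d B ∧ IsMaxOn (objective ε) {B | Admissible A d B} B :=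
  (upperSemicontinuousOn_objective A hd.le hε hεA).exists_isMaxOn
    ⟨trim A, trim_admissible hA hd hdA⟩ (isCompact_setOf_admissible A hd.le)

def mergeDisks (B : ASC) (k l : ℕ) (c : ℂ) : ASC := fun n =>
  if n = k + 1 then (c, (B (k + 1)).2 + (B (l + 1)).2)
  else if n = l + 1 then (ctr B (l + 1), 0) else B n

section mergeDisks

variable {k l : ℕ} {c : ℂ}

theorem mergeDisks_zero : mergeDisks B k l c 0 = B 0 := by simp [mergeDisks]

theorem ctr_mergeDisks_left : ctr (mergeDisks B k l c) (k + 1) = c := by simp [mergeDisks, ctr]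

theorem ctr_mergeDisks_of_ne {n : ℕ} (hn : n ≠ k + 1) : ctr (mergeDisks B k l c) n = ctr B n := by
  by_cases hl : n = l + 1
  · subst hl
    have hlk : l ≠ k := by omega
    simp [mergeDisks, ctr, hlk]
  · simp [mergeDisks, ctr, hn, hl]

theorem rad_mergeDisks_left :
    rad (mergeDisks B k l c) (k + 1) = rad B (k + 1) + rad B (l + 1) := by
  simp [mergeDisks, rad]

theorem rad_mergeDisks_right (hkl : k ≠ l) : rad (mergeDisks B k l c) (l + 1) = 0 := by
  simp [mergeDisks, rad, hkl.symm]

theorem rad_mergeDisks_of_ne {n : ℕ} (hk : n ≠ k) (hl : n ≠ l) :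
    rad (mergeDisks B k l c) (n + 1) = rad B (n + 1) := by
  simp [mergeDisks, rad, hk, hl]

theorem rad_mergeDisks_of_notMem {n : ℕ} (hn : n ∉ ({k, l} : Finset ℕ)) :
    rad (mergeDisks B k l c) (n + 1) = rad B (n + 1) := by
  simp only [Finset.mem_insert, Finset.mem_singleton, not_or] at hn
  exact rad_mergeDisks_of_ne hn.1 hn.2

theorem objective_mergeDisks (hs : Summable fun n => penalizedRad ε B (n + 1)) (hkl : k ≠ l) :
    objective ε (mergeDisks B k l c) = objective ε B + 2 * ε * rad B (k + 1) * rad B (l + 1) := by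
  have h := tsum_sub_tsum_eq_sum_sub
    (f := fun n => penalizedRad ε (mergeDisks B k l c) (n + 1)) hs {k, l}
    fun n hn => by simp only [penalizedRad, rad_mergeDisks_of_notMem hn]
  rw [Finset.sum_pair hkl] at h
  have h0 : penalizedRad ε (mergeDisks B k l c) 0 = penalizedRad ε B 0 := by
    simp [penalizedRad, rad, mergeDisks_zero]
  have hkl' : penalizedRad ε (mergeDisks B k l c) (k + 1) - penalizedRad ε B (k + 1) +
      (penalizedRad ε (mergeDisks B k l c) (l + 1) - penalizedRad ε B (l + 1)) =
      -(2 * ε * rad B (k + 1) * rad B (l + 1)) := by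
    simp only [penalizedRad, rad_mergeDisks_left, rad_mergeDisks_right hkl]
    ring
  rw [objective, objective, h0]
  linarith

theorem Admissible.mergeDisks (hB : Admissible A d B) (hkl : k < l)
    (hc : c ∈ segment ℝ (ctr B (k + 1)) (ctr B (l + 1)))
    (hck : dist (ctr B (k + 1)) c ≤ rad B (l + 1)) (hcl : dist (ctr B (l + 1)) c ≤ rad B (k + 1)) :
    Admissible A d (mergeDisks B k l c) := by
  set B' := SwissCheese.mergeDisks B k l c
  have htsum : ∑' n, rad B' (n + 1) = ∑' n, rad B (n + 1) := by
    have h := tsum_sub_tsum_eq_sum_sub (f := fun n => rad B' (n + 1)) hB.summable {k, l}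
      fun n hn => rad_mergeDisks_of_notMem hn
    rw [Finset.sum_pair hkl.ne, rad_mergeDisks_left, rad_mergeDisks_right hkl.ne] at h
    linarith
  have h0 : rad B' 0 = rad B 0 ∧ ctr B' 0 = ctr B 0 := by simp [B', rad, ctr, mergeDisks_zero]
  refine ⟨fun n => ?_, ?_, fun N => ?_, fun n hn => ?_⟩
  · by_cases hn : n = k + 1
    · rw [hn, ctr_mergeDisks_left]
      exact (convex_closedBall _ _).segment_subset (hB.dist_ctr_le _) (hB.dist_ctr_le _) hc
    · rw [ctr_mergeDisks_of_ne hn]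
      exact hB.dist_ctr_le n
  · simpa [h0] using hB.rad_add_dist_le
  · calc d + ∑ n ∈ Finset.range N, rad B' (n + 1)
        ≤ d + ∑' n, rad B' (n + 1) := by
          gcongr
          exact (hB.summable.congr_of_eq_off_finset _ fun n hn => rad_mergeDisks_of_notMem hn
            ).sum_le_tsum _ fun n _ => rad_nonneg B' _
      _ ≤ rad B' 0 := by rw [htsum, h0.1]; exact hB.add_tsum_le
  · rcases hB.covers n hn with ⟨m, hmn, hm⟩ | hout
    · left
      by_cases hm' : m = k ∨ m = l
      · refine ⟨k, by omega, ?_⟩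
        rw [ctr_mergeDisks_left, rad_mergeDisks_left]
        rcases hm' with rfl | rfl <;> linarith [dist_triangle (ctr A (n + 1)) (ctr B (m + 1)) c]
      · push Not at hm'
        refine ⟨m, hmn, ?_⟩
        rwa [ctr_mergeDisks_of_ne (by omega), rad_mergeDisks_of_ne hm'.1 hm'.2]
    · right
      rwa [h0.1, h0.2]

end mergeDisks

def shrinkOuter (B : ASC) (k : ℕ) (c : ℂ) : ASC := fun n =>
  if n = 0 then (c, (B 0).2 - (B (k + 1)).2)
  else if n = k + 1 then (ctr B (k + 1), 0) else B n

section shrinkOuter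

variable {k : ℕ} {c : ℂ}

theorem ctr_shrinkOuter_zero : ctr (shrinkOuter B k c) 0 = c := by simp [shrinkOuter, ctr]

theorem ctr_shrinkOuter_succ (n : ℕ) : ctr (shrinkOuter B k c) (n + 1) = ctr B (n + 1) := by
  by_cases hn : n = k <;> simp [shrinkOuter, ctr, hn]

theorem rad_shrinkOuter_zero (hk : rad B (k + 1) ≤ rad B 0) :
    rad (shrinkOuter B k c) 0 = rad B 0 - rad B (k + 1) := by
  simp [shrinkOuter, rad, NNReal.coe_sub (NNReal.coe_le_coe.1 hk)]

theorem rad_shrinkOuter_self : rad (shrinkOuter B k c) (k + 1) = 0 := by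
  simp [shrinkOuter, rad]

theorem rad_shrinkOuter_of_ne {n : ℕ} (hn : n ≠ k) :
    rad (shrinkOuter B k c) (n + 1) = rad B (n + 1) := by
  simp [shrinkOuter, rad, hn]

theorem objective_shrinkOuter (hs : Summable fun n => penalizedRad ε B (n + 1))
    (hk : rad B (k + 1) ≤ rad B 0) :
    objective ε (shrinkOuter B k c) =
      objective ε B + 2 * ε * rad B (k + 1) * (rad B 0 - rad B (k + 1)) := by
  have h := tsum_sub_tsum_eq_sum_sub
    (f := fun n => penalizedRad ε (shrinkOuter B k c) (n + 1)) hs {k} fun n hn => by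
      simp only [penalizedRad, rad_shrinkOuter_of_ne (Finset.notMem_singleton.1 hn)]
  rw [Finset.sum_singleton] at h
  have hk' : penalizedRad ε (shrinkOuter B k c) 0 - penalizedRad ε B 0 -
      (penalizedRad ε (shrinkOuter B k c) (k + 1) - penalizedRad ε B (k + 1)) =
      2 * ε * rad B (k + 1) * (rad B 0 - rad B (k + 1)) := by
    simp only [penalizedRad, rad_shrinkOuter_zero hk, rad_shrinkOuter_self]
    ring
  rw [objective, objective]
  linarith

theorem Admissible.shrinkOuter (hB : Admissible A d B) (hd : 0 ≤ d)
    (hc : dist c (ctr B 0) ≤ rad B (k + 1)) (hck : rad B 0 ≤ dist c (ctr B (k + 1))) :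
    Admissible A d (shrinkOuter B k c) := by
  set B' := SwissCheese.shrinkOuter B k c
  have hk : rad B (k + 1) ≤ rad B 0 := by linarith [hB.add_rad_succ_le k]
  have hrad : ∀ n ∉ ({k} : Finset ℕ), rad B' (n + 1) = rad B (n + 1) := fun n hn =>
    rad_shrinkOuter_of_ne (Finset.notMem_singleton.1 hn)
  have htsum : ∑' n, rad B' (n + 1) = ∑' n, rad B (n + 1) - rad B (k + 1) := by
    have h := tsum_sub_tsum_eq_sum_sub (f := fun n => rad B' (n + 1)) hB.summable {k} hrad
    rw [Finset.sum_singleton, rad_shrinkOuter_self] at h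
    linarith
  have hc0 : dist c (ctr A 0) ≤ rad B (k + 1) + dist (ctr B 0) (ctr A 0) := by
    linarith [dist_triangle c (ctr B 0) (ctr A 0)]
  have hrad0 := hB.rad_add_dist_le
  refine ⟨fun n => ?_, ?_, fun N => ?_, fun n hn => ?_⟩
  · rcases n with _ | n
    · rw [ctr_shrinkOuter_zero]
      linarith [rad_nonneg B 0, dist_nonneg (x := ctr B 0) (y := ctr A 0)]
    · rw [ctr_shrinkOuter_succ]
      exact hB.dist_ctr_le _
  · rw [rad_shrinkOuter_zero hk, ctr_shrinkOuter_zero]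
    linarith
  · calc d + ∑ n ∈ Finset.range N, rad B' (n + 1)
        ≤ d + ∑' n, rad B' (n + 1) := by
          gcongr
          exact (hB.summable.congr_of_eq_off_finset _ hrad).sum_le_tsum _
            fun n _ => rad_nonneg B' _
      _ ≤ rad B' 0 := by rw [htsum, rad_shrinkOuter_zero hk]; linarith [hB.add_tsum_le]
  · rw [rad_shrinkOuter_zero hk, ctr_shrinkOuter_zero]
    rcases hB.covers n hn with ⟨m, hmn, hm⟩ | hout
    · by_cases hmk : m = k
      · subst hmk
        right
        linarith [dist_triangle c (ctr A (n + 1)) (ctr B (m + 1)), dist_comm c (ctr A (n + 1))]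
      · left
        refine ⟨m, hmn, ?_⟩
        rwa [ctr_shrinkOuter_succ, rad_shrinkOuter_of_ne hmk]
    · right
      linarith [dist_triangle (ctr A (n + 1)) c (ctr B 0)]

end shrinkOuter

namespace Admissible

variable {k l : ℕ}

theorem exists_objective_lt_of_dist_le (hB : Admissible A d B) (hd : 0 ≤ d) (hε : 0 < ε)
    (hεA : ε * rad A 0 ≤ 1) (hkl : k < l) (hk : 0 < rad B (k + 1)) (hl : 0 < rad B (l + 1))
    (h : dist (ctr B (k + 1)) (ctr B (l + 1)) ≤ rad B (l + 1) + rad B (k + 1)) :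
    ∃ B', Admissible A d B' ∧ objective ε B < objective ε B' := by
  obtain ⟨c, hc, hck, hcl⟩ := exists_mem_segment_dist_le_dist_le hl.le hk.le h
  refine ⟨_, hB.mergeDisks hkl hc hck hcl, ?_⟩
  rw [objective_mergeDisks (hB.summable_penalizedRad hd hε.le hεA) hkl.ne]
  have : 0 < 2 * ε * rad B (k + 1) * rad B (l + 1) := by positivity
  linarith

theorem exists_objective_lt_of_le_dist (hB : Admissible A d B) (hd : 0 < d) (hε : 0 < ε)
    (hεA : ε * rad A 0 ≤ 1) (hk : 0 < rad B (k + 1))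
    (h : rad B 0 ≤ rad B (k + 1) + dist (ctr B (k + 1)) (ctr B 0)) :
    ∃ B', Admissible A d B' ∧ objective ε B < objective ε B' := by
  have hlt : rad B (k + 1) < rad B 0 := by linarith [hB.add_rad_succ_le k]
  have hne : ctr B (k + 1) ≠ ctr B 0 := by
    intro heq
    rw [heq, dist_self] at h
    linarith
  obtain ⟨c, hc, hck⟩ := exists_dist_eq_and_dist_eq_add hne (rad_nonneg B (k + 1))
  refine ⟨_, hB.shrinkOuter hd.le hc.le (by rw [hck, dist_comm]; linarith), ?_⟩
  rw [objective_shrinkOuter (hB.summable_penalizedRad hd.le hε.le hεA) hlt.le]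
  have : 0 < 2 * ε * rad B (k + 1) * (rad B 0 - rad B (k + 1)) := by
    have := sub_pos.2 hlt
    positivity
  linarith

theorem isClassicalASC_of_isMaxOn (hB : Admissible A d B) (hd : 0 < d) (hε : 0 < ε)
    (hεA : ε * rad A 0 ≤ 1) (hmax : IsMaxOn (objective ε) {B | Admissible A d B} B) :
    IsClassicalASC B := by
  have hnot : ∀ B', Admissible A d B' → ¬objective ε B < objective ε B' :=
    fun B' hB' => not_lt.2 (isMaxOn_iff.1 hmax B' hB')
  refine ⟨(rhoSum_lt_top_iff B).2 hB.summable, hB.rad_pos hd, ?_⟩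
  rintro _ ⟨hk1, hk⟩
  obtain ⟨k, rfl⟩ := Nat.exists_eq_add_one.2 hk1
  refine ⟨closedBall_subset_ball' (not_le.1 fun h => ?_), ?_⟩
  · obtain ⟨B', hB', hlt⟩ := hB.exists_objective_lt_of_le_dist hd hε hεA hk h
    exact hnot B' hB' hlt
  rintro _ ⟨hl1, hl⟩ hlk
  obtain ⟨l, rfl⟩ := Nat.exists_eq_add_one.2 hl1
  by_contra hmeet
  have h : dist (ctr B (k + 1)) (ctr B (l + 1)) ≤ rad B (k + 1) + rad B (l + 1) :=
    not_lt.1 fun h => hmeet (closedBall_disjoint_closedBall h).inter_eq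
  rcases lt_or_gt_of_ne hlk with hlk | hlk
  · obtain ⟨B', hB', hlt⟩ := hB.exists_objective_lt_of_dist_le hd.le hε hεA (k := l) (l := k)
      (by omega) hl hk (by rw [dist_comm]; linarith)
    exact hnot B' hB' hlt
  · obtain ⟨B', hB', hlt⟩ := hB.exists_objective_lt_of_dist_le hd.le hε hεA (by omega) hk hl
      (by linarith)
    exact hnot B' hB' hlt

end Admissible

end SwissCheese

open SwissCheese

/-- **Feinstein–Heath classicalisation theorem** (Theorem 4.1):
if `δ₁(A) > 0` then there is a classical abstract Swiss cheese `B` with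
`X_B ⊆ X_A` and `δ₁(B) ≥ δ₁(A)`. -/
theorem stmt0 (A : ASC) (h : 0 < delta1 A) :
    ∃ B : ASC, IsClassicalASC B ∧ Xset B ⊆ Xset A ∧ delta1 A ≤ delta1 B := by
  have hA := summable_of_delta1_pos h
  set d := rad A 0 - ∑' n, rad A (n + 1)
  have hδ : delta1 A = d := delta1_eq_of_summable hA
  have hd : 0 < d := by exact_mod_cast hδ ▸ h
  have hr0 : 0 < rad A 0 := by
    have : 0 ≤ ∑' n, rad A (n + 1) := tsum_nonneg fun n => rad_nonneg A (n + 1)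
    linarith
  obtain ⟨B, hB, hmax⟩ := exists_admissible_isMaxOn_objective (ε := (rad A 0)⁻¹) hA hd
    (sub_add_cancel _ _).le (inv_nonneg.2 hr0.le) (inv_mul_cancel₀ hr0.ne').le
  refine ⟨B, hB.isClassicalASC_of_isMaxOn hd (inv_pos.2 hr0) (inv_mul_cancel₀ hr0.ne').le hmax,
    hB.xset_subset, ?_⟩
  rw [hδ, delta1_eq_of_summable hB.summable, EReal.coe_le_coe_iff]
  linarith [hB.add_tsum_le]

end
end

section
/- Let M, R > 0 and let α > 1. Then the restriction of the discrepancy function δ_α to N(M,R) is real-valued and continuous, i.e. whenever A^(m) ∈ N(M,R) converge to A ∈ N(M,R) in the product topology, δ_α(A^(m)) → δ_α(A). -/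
open Metric Set Filter Topology ENNReal

noncomputable section

open scoped NNReal in
private lemma aux_facts (R : ℝ) (hR : 0 < R) (α : ℝ) (hα : 1 < α) (M : ℝ≥0∞)
    (B : ASC) (hB : memNMR M (ENNReal.ofReal R) B) :
    (∀ n : ℕ, ((B (n+1)).2 : ℝ) ≤ R / ((n : ℝ) + 1)) ∧
    Summable (fun n : ℕ => ((B (n+1)).2 : ℝ) ^ α) ∧
    deltaAlpha α B =
      ((((B 0).2 : ℝ) ^ α - ∑' n : ℕ, ((B (n+1)).2 : ℝ) ^ α : ℝ) : EReal) := by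
  have hα0 : (0:ℝ) < α := lt_trans one_pos hα
  obtain ⟨⟨hρtop, hmono⟩, _, hρR⟩ := hB
  have hsum_nn : Summable (fun n : ℕ => (B (n+1)).2) :=
    ENNReal.tsum_coe_ne_top_iff_summable.mp hρtop.ne
  have hsum : Summable (fun n : ℕ => ((B (n+1)).2 : ℝ)) :=
    NNReal.summable_coe.mpr hsum_nn
  have htsum_le : (∑' n : ℕ, ((B (n+1)).2 : ℝ)) ≤ R := by
    have h1 : ((∑' n : ℕ, (B (n+1)).2 : ℝ≥0) : ℝ≥0∞) ≤ ENNReal.ofReal R := by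
      rw [ENNReal.coe_tsum hsum_nn]; exact hρR
    have h2 := ENNReal.toReal_mono ENNReal.ofReal_ne_top h1
    rwa [ENNReal.coe_toReal, ENNReal.toReal_ofReal hR.le, NNReal.coe_tsum] at h2
  have hterm : ∀ n : ℕ, ((B (n+1)).2 : ℝ) ≤ R / ((n : ℝ) + 1) := by
    intro n
    have hx : ∀ m : ℕ, ∀ k ≤ m, ((B (m+1)).2 : ℝ) ≤ ((B (k+1)).2 : ℝ) := by
      intro m
      induction m with
      | zero => intro k hk; interval_cases k; exact le_rfl
      | succ m ih =>
        intro k hk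
        have hstep : ((B (m+2)).2 : ℝ) ≤ ((B (m+1)).2 : ℝ) := by
          exact_mod_cast hmono (m+1) (Nat.le_add_left 1 m)
        rcases Nat.eq_or_lt_of_le hk with h | h
        · subst h; exact le_rfl
        · exact hstep.trans (ih k (Nat.lt_succ_iff.mp h))
    have hmul : ((n : ℝ) + 1) * ((B (n+1)).2 : ℝ) ≤ R := by
      calc ((n : ℝ) + 1) * ((B (n+1)).2 : ℝ)
          = ∑ _k ∈ Finset.range (n+1), ((B (n+1)).2 : ℝ) := by
            rw [Finset.sum_const, Finset.card_range]; push_cast; ring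
        _ ≤ ∑ k ∈ Finset.range (n+1), ((B (k+1)).2 : ℝ) :=
            Finset.sum_le_sum (fun k hk => hx n k (Nat.lt_succ_iff.mp (Finset.mem_range.mp hk)))
        _ ≤ ∑' k : ℕ, ((B (k+1)).2 : ℝ) :=
            Summable.sum_le_tsum _ (fun i _ => NNReal.coe_nonneg _) hsum
        _ ≤ R := htsum_le
    have hpos : (0:ℝ) < (n : ℝ) + 1 := by positivity
    rw [le_div_iff₀ hpos]; linarith [hmul]
  have hsummable_rpow : Summable (fun n : ℕ => ((B (n+1)).2 : ℝ) ^ α) := by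
    have hbs : Summable (fun n : ℕ => (R / ((n : ℝ) + 1)) ^ α) := by
      have h1 : Summable (fun n : ℕ => 1 / ((n : ℝ)) ^ α) := Real.summable_one_div_nat_rpow.mpr hα
      have h2 : Summable (fun n : ℕ => 1 / (((n+1 : ℕ) : ℝ)) ^ α) :=
        (summable_nat_add_iff 1).mpr h1
      have h3 := h2.mul_left (R ^ α)
      refine h3.congr (fun n => ?_)
      push_cast
      rw [Real.div_rpow hR.le (by positivity), mul_one_div]
    refine Summable.of_nonneg_of_le (fun n => Real.rpow_nonneg (NNReal.coe_nonneg _) α)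
      (fun n => Real.rpow_le_rpow (NNReal.coe_nonneg _) (hterm n) hα0.le) hbs
  refine ⟨hterm, hsummable_rpow, ?_⟩
  have hsum_nnrpow : Summable (fun n : ℕ => (B (n+1)).2 ^ α) := by
    rw [← NNReal.summable_coe]
    refine hsummable_rpow.congr (fun n => ?_)
    rw [NNReal.coe_rpow]
  unfold deltaAlpha
  have e1 : ∀ x : ℝ≥0, ((x : ℝ≥0∞) ^ α) = ((x ^ α : ℝ≥0) : ℝ≥0∞) :=
    fun x => (ENNReal.coe_rpow_of_nonneg x hα0.le).symm
  rw [e1]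
  have e2 : (∑' n : ℕ, ((B (n + 1)).2 : ℝ≥0∞) ^ α) = ((∑' n : ℕ, (B (n+1)).2 ^ α : ℝ≥0) : ℝ≥0∞) := by
    rw [ENNReal.coe_tsum hsum_nnrpow]
    exact tsum_congr (fun n => e1 _)
  rw [e2, EReal.coe_nnreal_eq_coe_real, EReal.coe_nnreal_eq_coe_real, ← EReal.coe_sub,
    NNReal.coe_rpow, NNReal.coe_tsum]
  push_cast
  rfl

/-- For `M, R > 0` and `α > 1`, the restriction of `δ_α` to `N(M,R)` is
real-valued and (sequentially) continuous. -/
theorem stmt2 (M R : ℝ) (hM : 0 < M) (hR : 0 < R) (α : ℝ) (hα : 1 < α) :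
    (∀ A : ASC, memNMR (ENNReal.ofReal M) (ENNReal.ofReal R) A →
      deltaAlpha α A ≠ ⊥ ∧ deltaAlpha α A ≠ ⊤) ∧
    ∀ (A' : ℕ → ASC) (A : ASC),
      (∀ m, memNMR (ENNReal.ofReal M) (ENNReal.ofReal R) (A' m)) →
      memNMR (ENNReal.ofReal M) (ENNReal.ofReal R) A →
      Tendsto A' atTop (nhds A) →
      Tendsto (fun m => deltaAlpha α (A' m)) atTop (nhds (deltaAlpha α A)) := by
  constructor
  · intro A hA
    rw [(aux_facts R hR α hα _ A hA).2.2]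
    exact ⟨EReal.coe_ne_bot _, EReal.coe_ne_top _⟩
  · intro A' A hA' hA hconv
    have hα0 : (0:ℝ) < α := lt_trans one_pos hα
    have hcoord : ∀ n : ℕ, Tendsto (fun m => ((A' m n).2 : ℝ)) atTop (nhds ((A n).2 : ℝ)) := by
      intro n
      have h1 : Tendsto (fun m => A' m n) atTop (nhds (A n)) := tendsto_pi_nhds.mp hconv n
      exact (NNReal.continuous_coe.tendsto _).comp ((continuous_snd.tendsto _).comp h1)
    have hrpow : ∀ n : ℕ, Tendsto (fun m => ((A' m n).2 : ℝ) ^ α) atTop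
        (nhds (((A n).2 : ℝ) ^ α)) :=
      fun n => ((Real.continuousAt_rpow_const _ α (Or.inr hα0.le)).tendsto).comp (hcoord n)
    have hbs : Summable (fun n : ℕ => (R / ((n : ℝ) + 1)) ^ α) := by
      have h1 : Summable (fun n : ℕ => 1 / ((n : ℝ)) ^ α) := Real.summable_one_div_nat_rpow.mpr hα
      have h2 : Summable (fun n : ℕ => 1 / (((n+1 : ℕ) : ℝ)) ^ α) :=
        (summable_nat_add_iff 1).mpr h1
      have h3 := h2.mul_left (R ^ α)
      refine h3.congr (fun n => ?_)
      push_cast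
      rw [Real.div_rpow hR.le (by positivity), mul_one_div]
    have htsum : Tendsto (fun m => ∑' n : ℕ, ((A' m (n+1)).2 : ℝ) ^ α) atTop
        (nhds (∑' n : ℕ, ((A (n+1)).2 : ℝ) ^ α)) := by
      refine tendsto_tsum_of_dominated_convergence hbs (fun n => hrpow (n+1)) ?_
      filter_upwards with m n
      rw [Real.norm_of_nonneg (Real.rpow_nonneg (NNReal.coe_nonneg _) α)]
      exact Real.rpow_le_rpow (NNReal.coe_nonneg _)
        ((aux_facts R hR α hα _ (A' m) (hA' m)).1 n) hα0.le
    have hmain : Tendsto (fun m => ((A' m 0).2 : ℝ) ^ α - ∑' n : ℕ, ((A' m (n+1)).2 : ℝ) ^ α)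
        atTop (nhds (((A 0).2 : ℝ) ^ α - ∑' n : ℕ, ((A (n+1)).2 : ℝ) ^ α)) :=
      (hrpow 0).sub htsum
    have heq : ∀ m, deltaAlpha α (A' m) =
        ((((A' m 0).2 : ℝ) ^ α - ∑' n : ℕ, ((A' m (n+1)).2 : ℝ) ^ α : ℝ) : EReal) :=
      fun m => (aux_facts R hR α hα _ (A' m) (hA' m)).2.2
    rw [(aux_facts R hR α hα _ A hA).2.2]
    simp only [heq]
    exact EReal.tendsto_coe.mpr hmain


end
end

section
/- Let a₁, a₂ ∈ ℂ and r₁ > r₂ > 0 with B̄(a₂, r₂) ⊄ B(a₁, r₁). Then there exists a unique pair (a, r) ∈ ℂ × [0,∞) with B̄(a, r) ⊆ B̄(a₁, r₁) and B(a₂, r₂) ∩ B̄(a, r) = ∅ such that r is maximal among all such pairs. Moreover r ≥ r₁ − r₂, and equality holds if and only if B(a₂, r₂) ⊆ B(a₁, r₁). -/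
open Metric Set Filter Topology ENNReal

noncomputable section

private lemma exists_unit_dir (a b : ℂ) : ∃ u : ℂ, ‖u‖ = 1 ∧ a - b = ‖a - b‖ • u := by
  rcases eq_or_ne a b with rfl | h
  · exact ⟨1, by simp⟩
  · have h0 : ‖a - b‖ ≠ 0 := by simpa [sub_eq_zero] using h
    refine ⟨‖a - b‖⁻¹ • (a - b), ?_, ?_⟩
    · rw [norm_smul, Real.norm_eq_abs, abs_of_nonneg (by positivity), inv_mul_cancel₀ h0]
    · rw [smul_smul, mul_inv_cancel₀ h0, one_smul]

private lemma exists_far_point (a b : ℂ) (t : ℝ) (ht : 0 ≤ t) :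
    ∃ z : ℂ, dist z a = t ∧ dist z b = dist a b + t := by
  obtain ⟨u, hu, hab⟩ := exists_unit_dir a b
  refine ⟨a + t • u, ?_, ?_⟩
  · rw [dist_eq_norm, add_sub_cancel_left, norm_smul, hu, Real.norm_eq_abs,
      abs_of_nonneg ht, mul_one]
  · rw [dist_eq_norm, dist_eq_norm]
    have : a + t • u - b = (‖a - b‖ + t) • u := by
      rw [add_smul, ← hab]; ring
    rw [this, norm_smul, hu, Real.norm_eq_abs, mul_one,
      abs_of_nonneg (by positivity)]

private lemma exists_near_point (a q : ℂ) (r : ℝ) (h0 : 0 ≤ r) (h1 : r ≤ dist a q) :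
    ∃ z : ℂ, dist z q = r ∧ dist z a = dist a q - r := by
  obtain ⟨u, hu, hab⟩ := exists_unit_dir a q
  refine ⟨q + r • u, ?_, ?_⟩
  · rw [dist_eq_norm, add_sub_cancel_left, norm_smul, hu, Real.norm_eq_abs,
      abs_of_nonneg h0, mul_one]
  · rw [dist_eq_norm]
    have : q + r • u - a = (r - ‖a - q‖) • u := by
      rw [sub_smul, ← hab]; ring_nf
    rw [this, norm_smul, hu, Real.norm_eq_abs, mul_one, dist_eq_norm] at *
    rw [abs_of_nonpos (by linarith [h1])]
    linarith

private lemma cb_sub_dist {q b : ℂ} {r R : ℝ} (hr : 0 ≤ r)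
    (h : closedBall q r ⊆ closedBall b R) : dist q b + r ≤ R := by
  obtain ⟨z, hz1, hz2⟩ := exists_far_point q b r hr
  have := h (mem_closedBall.2 hz1.le)
  rw [mem_closedBall, hz2] at this
  exact this

private lemma disj_dist {a q : ℂ} {s r : ℝ} (hs : 0 < s) (hr : 0 ≤ r)
    (h : ball a s ∩ closedBall q r = ∅) : s + r ≤ dist a q := by
  by_contra hlt
  push_neg at hlt
  rw [Set.eq_empty_iff_forall_notMem] at h
  rcases le_or_gt (dist a q) r with hle | hgt
  · exact h a ⟨mem_ball_self hs, mem_closedBall.2 hle⟩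
  · obtain ⟨z, hz1, hz2⟩ := exists_near_point a q r hr hgt.le
    exact h z ⟨mem_ball.2 (by rw [hz2]; linarith), mem_closedBall.2 hz1.le⟩

private lemma ball_sub_dist {a b : ℂ} {s R : ℝ} (hs : 0 < s)
    (h : ball a s ⊆ ball b R) : dist a b + s ≤ R := by
  by_contra hlt
  push_neg at hlt
  have ht0 : (0:ℝ) ≤ max 0 (R - dist a b) := le_max_left _ _
  obtain ⟨z, hz1, hz2⟩ := exists_far_point a b (max 0 (R - dist a b)) ht0
  have hzin : z ∈ ball a s := by
    rw [mem_ball, hz1, max_lt_iff]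
    constructor <;> linarith
  have := h hzin
  rw [mem_ball, hz2] at this
  have : R - dist a b ≤ max 0 (R - dist a b) := le_max_right _ _
  linarith [h hzin, (mem_ball.1 (h hzin)), hz2 ▸ mem_ball.1 (h hzin)]

/-- Pulling in the closed disk (Lemma 3.3): there is a unique maximal closed
disk inside `B̄(a₁,r₁)` avoiding `B(a₂,r₂)`; moreover `r ≥ r₁ − r₂` with
equality iff `B(a₂,r₂) ⊆ B(a₁,r₁)`. -/
theorem stmt4 (a₁ a₂ : ℂ) (r₁ r₂ : ℝ) (h₂ : 0 < r₂) (h₁₂ : r₂ < r₁)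
    (hns : ¬ closedBall a₂ r₂ ⊆ ball a₁ r₁) :
    ∃ p : ℂ × ℝ,
      (0 ≤ p.2 ∧ closedBall p.1 p.2 ⊆ closedBall a₁ r₁ ∧
        ball a₂ r₂ ∩ closedBall p.1 p.2 = ∅ ∧
        ∀ q : ℂ × ℝ, 0 ≤ q.2 → closedBall q.1 q.2 ⊆ closedBall a₁ r₁ →
          ball a₂ r₂ ∩ closedBall q.1 q.2 = ∅ → q.2 ≤ p.2) ∧
      (∀ q : ℂ × ℝ,
        (0 ≤ q.2 ∧ closedBall q.1 q.2 ⊆ closedBall a₁ r₁ ∧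
          ball a₂ r₂ ∩ closedBall q.1 q.2 = ∅ ∧
          ∀ q' : ℂ × ℝ, 0 ≤ q'.2 → closedBall q'.1 q'.2 ⊆ closedBall a₁ r₁ →
            ball a₂ r₂ ∩ closedBall q'.1 q'.2 = ∅ → q'.2 ≤ q.2) →
        q = p) ∧
      r₁ - r₂ ≤ p.2 ∧ (p.2 = r₁ - r₂ ↔ ball a₂ r₂ ⊆ ball a₁ r₁) := by
  have hdge : r₁ - r₂ ≤ dist a₂ a₁ := by
    by_contra h
    push_neg at h
    refine hns fun x hx => mem_ball.2 ?_
    have h1 : dist x a₂ ≤ r₂ := mem_closedBall.1 hx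
    have h2 : dist x a₁ ≤ dist x a₂ + dist a₂ a₁ := dist_triangle _ _ _
    linarith
  set d : ℝ := dist a₂ a₁ with hd
  have hd0 : 0 < d := lt_of_lt_of_le (by linarith) hdge
  set r : ℝ := min r₁ ((d + r₁ - r₂) / 2) with hr
  have hrge : r₁ - r₂ ≤ r := le_min (by linarith) (by linarith)
  have hr0 : 0 < r := lt_of_lt_of_le (by linarith) hrge
  have hrle : r ≤ r₁ := min_le_left _ _
  have hrle2 : r ≤ (d + r₁ - r₂) / 2 := min_le_right _ _
  have hq0 : (0:ℝ) ≤ (r₁ - r) / d := div_nonneg (by linarith) hd0.le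
  set p : ℂ := a₁ + ((r₁ - r) / d) • (a₁ - a₂) with hp
  have hnorm : ‖a₁ - a₂‖ = d := by rw [hd, dist_eq_norm, norm_sub_rev]
  have hpa1 : dist p a₁ = r₁ - r := by
    rw [dist_eq_norm, hp, add_sub_cancel_left, norm_smul, Real.norm_eq_abs,
      abs_of_nonneg hq0, hnorm]
    field_simp
  have hpa2 : dist a₂ p = d + (r₁ - r) := by
    rw [dist_comm, dist_eq_norm, hp]
    have he : a₁ + ((r₁ - r) / d) • (a₁ - a₂) - a₂ = (1 + (r₁ - r) / d) • (a₁ - a₂) := by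
      rw [add_smul, one_smul]; ring
    rw [he, norm_smul, Real.norm_eq_abs, hnorm, abs_of_nonneg (by linarith)]
    field_simp
  have hsub : closedBall p r ⊆ closedBall a₁ r₁ :=
    closedBall_subset_closedBall' (by rw [hpa1]; linarith)
  have hdisj : ball a₂ r₂ ∩ closedBall p r = ∅ := by
    rw [Set.eq_empty_iff_forall_notMem]
    rintro z ⟨hz1, hz2⟩
    rw [mem_ball] at hz1
    rw [mem_closedBall] at hz2
    have ht := dist_triangle a₂ z p
    rw [dist_comm a₂ z, hpa2] at ht
    linarith
  have hmax : ∀ q : ℂ × ℝ, 0 ≤ q.2 → closedBall q.1 q.2 ⊆ closedBall a₁ r₁ →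
      ball a₂ r₂ ∩ closedBall q.1 q.2 = ∅ → q.2 ≤ r := by
    intro q hq hsubq hdisjq
    have h1 : dist q.1 a₁ + q.2 ≤ r₁ := cb_sub_dist hq hsubq
    have h2 : r₂ + q.2 ≤ dist a₂ q.1 := disj_dist h₂ hq hdisjq
    have h3 : dist a₂ q.1 ≤ d + dist q.1 a₁ := by
      rw [dist_comm q.1 a₁]
      exact dist_triangle _ _ _
    have h4 : 0 ≤ dist q.1 a₁ := dist_nonneg
    exact le_min (by linarith) (by linarith)
  refine ⟨(p, r), ⟨hr0.le, hsub, hdisj, hmax⟩, ?_, hrge, ?_⟩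
  · rintro ⟨c, s⟩ ⟨hs0, hsubc, hdisjc, hmaxc⟩
    simp only at hs0 hsubc hdisjc
    have hsr : s = r :=
      le_antisymm (hmax (c, s) hs0 hsubc hdisjc) (hmaxc (p, r) hr0.le hsub hdisj)
    have h1 : dist c a₁ + s ≤ r₁ := cb_sub_dist hs0 hsubc
    have h2 : r₂ + s ≤ dist a₂ c := disj_dist h₂ hs0 hdisjc
    have h3 : dist a₂ c ≤ d + dist c a₁ := by
      rw [dist_comm c a₁]
      exact dist_triangle _ _ _
    have hcp : c = p := by
      rcases le_or_gt r₁ ((d + r₁ - r₂) / 2) with hc | hc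
      · have hrr : r = r₁ := min_eq_left hc
        have hc1 : c = a₁ := by
          rw [← dist_le_zero]; linarith
        have hz : (r₁ - r) / d = 0 := by rw [hrr]; simp
        rw [hp, hc1, hz]
        simp
      · have hrr : r = (d + r₁ - r₂) / 2 := min_eq_right hc.le
        have e1 : dist c a₁ = r₁ - s := by linarith
        have e2 : dist a₂ c = d + (r₁ - s) := by linarith
        have hne : a₁ - a₂ ≠ 0 := by
          intro h
          rw [h, norm_zero] at hnorm
          linarith
        have hray : SameRay ℝ (a₁ - a₂) (c - a₁) := by
          rw [sameRay_iff_norm_add, show a₁ - a₂ + (c - a₁) = c - a₂ by ring, hnorm,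
            ← dist_eq_norm, ← dist_eq_norm, dist_comm c a₂]
          linarith
        obtain ⟨t, ht0, hteq⟩ := hray.exists_nonneg_left hne
        have htd : t * d = r₁ - s := by
          have hn := congrArg norm hteq
          rw [norm_smul, Real.norm_eq_abs, abs_of_nonneg ht0, hnorm,
            ← dist_eq_norm, e1] at hn
          exact hn
        have htv : t = (r₁ - r) / d := by
          rw [eq_div_iff hd0.ne']
          linarith
        have hc2 : c = a₁ + t • (a₁ - a₂) := by rw [hteq]; ring
        rw [hc2, hp, htv]
    rw [Prod.mk.injEq]
    exact ⟨hcp, hsr⟩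
  · show r = r₁ - r₂ ↔ ball a₂ r₂ ⊆ ball a₁ r₁
    constructor
    · intro he
      have hlt : r < r₁ := by linarith
      have hrr : r = (d + r₁ - r₂) / 2 := by
        rcases min_cases r₁ ((d + r₁ - r₂) / 2) with ⟨hm1, hm2⟩ | ⟨hm1, hm2⟩
        · exact absurd (hr.trans hm1) hlt.ne
        · exact hr.trans hm1
      have hd2 : d = r₁ - r₂ := by linarith
      exact ball_subset_ball' (by rw [← hd]; linarith)
    · intro hb
      have hbd := ball_sub_dist h₂ hb
      have hd2 : d = r₁ - r₂ := le_antisymm (by linarith) hdge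
      have h5 : (d + r₁ - r₂) / 2 = r₁ - r₂ := by rw [hd2]; ring
      rw [hr, h5]
      exact min_eq_right (by linarith)


end
end

section
/- Let A ∈ N be a redundancy-free abstract Swiss cheese with δ₁(A) > 0, set M = μ(A), R = ρ(A), and let S̃ be the set of all B ∈ N(M,R) partially above A. Let B = ((b_n, s_n)) ∈ S̃ and suppose k, ℓ ∈ S_B with k ≠ ℓ satisfy B̄(b_k, s_k) ∩ B̄(b_ℓ, s_ℓ) ≠ ∅. If B(b_k, s_k) ∩ B(b_ℓ, s_ℓ) ≠ ∅, then there exists B' ∈ S̃ with δ₁(B') > δ₁(B); otherwise there exists B' ∈ S̃ with δ₁(B') = δ₁(B) and δ₂(B') < δ₂(B). -/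
open Metric Set Filter Topology ENNReal

noncomputable section

/-!
Merge the two discs into one disc of radius
`s = max (max s_k s_l) ((|b_k - b_l| + s_k + s_l) / 2)` centred on the segment `[b_k, b_l]`.
It covers both discs, so the result is still partially above `A`; its centre is no farther
from `0` than `b_k` or `b_l`; and `s ≤ s_k + s_l`, so `ρ` does not grow. Inserting it where it
keeps the radii non-increasing gives an element of `S̃`. If the open discs meet, `s < s_k + s_l`
and `δ₁` increases. If they are only tangent, `s = s_k + s_l`: `δ₁` is unchanged, while the sum
of the squared radii grows by `2 s_k s_l`, so `δ₂` decreases.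
-/

open scoped NNReal

section Sequences

variable {α : Type*}

def skip (n i : ℕ) : ℕ := if i < n then i else i + 1

lemma skip_of_lt {n i : ℕ} (h : i < n) : skip n i = i := if_pos h

lemma skip_strictMono (n : ℕ) : StrictMono (skip n) := by
  intro a b hab
  unfold skip
  split_ifs <;> omega

lemma range_skip (n : ℕ) : range (skip n) = {n}ᶜ := by
  ext i
  simp only [mem_range, mem_compl_iff, mem_singleton_iff, skip]
  constructor
  · rintro ⟨i', rfl⟩
    split_ifs <;> omega
  · intro h
    rcases lt_or_gt_of_ne h with h | h
    · exact ⟨i, if_pos h⟩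
    · exact ⟨i - 1, by rw [if_neg (by omega)]; omega⟩

lemma tsum_eq_add_tsum_skip (f : ℕ → ℝ≥0∞) (n : ℕ) :
    ∑' i, f i = f n + ∑' i, f (skip n i) := by
  classical
  have hskip : ∀ i, skip n i ≠ n := fun i => by
    unfold skip
    split_ifs <;> omega
  rw [ENNReal.tsum_eq_add_tsum_ite n, ← (skip_strictMono n).injective.tsum_eq]
  · simp only [hskip, if_false]
  · rw [range_skip]
    intro i hi
    simp only [Function.mem_support, ne_eq, ite_eq_left_iff, Classical.not_imp] at hi
    exact hi.1

def insertAt (j : ℕ) (x : α) (g : ℕ → α) (i : ℕ) : α :=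
  if i < j then g i else if i = j then x else g (i - 1)

lemma insertAt_self (j : ℕ) (x : α) (g : ℕ → α) : insertAt j x g j = x := by
  simp [insertAt]

lemma insertAt_skip (j : ℕ) (x : α) (g : ℕ → α) (i : ℕ) :
    insertAt j x g (skip j i) = g i := by
  unfold insertAt skip
  split_ifs <;> first | rfl | omega

lemma apply_insertAt {β : Type*} (φ : α → β) (j : ℕ) (x : α) (g : ℕ → α) (i : ℕ) :
    φ (insertAt j x g i) = insertAt j (φ x) (φ ∘ g) i := by
  unfold insertAt
  split_ifs <;> rfl

lemma range_insertAt (j : ℕ) (x : α) (g : ℕ → α) :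
    range (insertAt j x g) = insert x (range g) := by
  refine Subset.antisymm ?_ (insert_subset ⟨j, insertAt_self j x g⟩ ?_)
  · rintro _ ⟨i, rfl⟩
    unfold insertAt
    split_ifs
    exacts [Or.inr (mem_range_self _), Or.inl rfl, Or.inr (mem_range_self _)]
  · rintro _ ⟨i, rfl⟩
    exact ⟨skip j i, insertAt_skip j x g i⟩

lemma tsum_insertAt (j : ℕ) (x : ℝ≥0∞) (g : ℕ → ℝ≥0∞) :
    ∑' i, insertAt j x g i = x + ∑' i, g i := by
  simp only [tsum_eq_add_tsum_skip (insertAt j x g) j, insertAt_self, insertAt_skip]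

lemma antitone_insertAt [Preorder α] {j : ℕ} {x : α} {g : ℕ → α} (hg : Antitone g)
    (hlt : ∀ i < j, x ≤ g i) (hge : ∀ i, j ≤ i → g i ≤ x) : Antitone (insertAt j x g) := by
  refine antitone_nat_of_succ_le fun i => ?_
  unfold insertAt
  split_ifs <;>
    first | omega | (apply hg; omega) | (apply hlt; omega) | (apply hge; omega)

lemma exists_antitone_insertAt [LinearOrder α] {x : α} {g : ℕ → α} (hg : Antitone g)
    (h : ∃ i, g i ≤ x) : ∃ j, Antitone (insertAt j x g) := by
  classical
  refine ⟨Nat.find h, antitone_insertAt hg (fun i hi => ?_) fun i hi => ?_⟩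
  · exact (not_le.mp (Nat.find_min h hi)).le
  · exact (hg hi).trans (Nat.find_spec h)

end Sequences

section Geometry

variable {E : Type*} [NormedAddCommGroup E] [NormedSpace ℝ E]

lemma exists_mem_segment_dist_le_le {x y : E} {p q : ℝ} (hp : 0 ≤ p) (hq : 0 ≤ q)
    (h : dist x y ≤ p + q) : ∃ c ∈ segment ℝ x y, dist c x ≤ p ∧ dist c y ≤ q := by
  rcases (add_nonneg hp hq).eq_or_lt with hpq | hpq
  · refine ⟨x, left_mem_segment ℝ x y, by simpa using hp, ?_⟩
    linarith
  set t := p / (p + q)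
  have ht₀ : 0 ≤ t := by positivity
  have ht₁ : t ≤ 1 := div_le_one_of_le₀ (by linarith) hpq.le
  have htpq : t * (p + q) = p := div_mul_cancel₀ p hpq.ne'
  refine ⟨AffineMap.lineMap x y t, segment_eq_image_lineMap ℝ x y ▸ ⟨t, ⟨ht₀, ht₁⟩, rfl⟩,
    ?_, ?_⟩
  · rw [dist_lineMap_left, Real.norm_of_nonneg ht₀]
    calc t * dist x y ≤ t * (p + q) := by gcongr
      _ = p := htpq
  · rw [dist_lineMap_right, Real.norm_of_nonneg (by linarith)]
    calc (1 - t) * dist x y ≤ (1 - t) * (p + q) := by gcongr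
      _ = q := by linear_combination -htpq

lemma exists_mem_segment_ball_subset_ball {x y : E} {r₁ r₂ s : ℝ} (h₁ : r₁ ≤ s) (h₂ : r₂ ≤ s)
    (h : dist x y + r₁ + r₂ ≤ 2 * s) :
    ∃ c ∈ segment ℝ x y, ball x r₁ ⊆ ball c s ∧ ball y r₂ ⊆ ball c s := by
  obtain ⟨c, hc, hcx, hcy⟩ :=
    exists_mem_segment_dist_le_le (p := s - r₁) (q := s - r₂) (by linarith) (by linarith)
      (by linarith)
  refine ⟨c, hc, ball_subset_ball' ?_, ball_subset_ball' ?_⟩ <;>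
    rw [dist_comm] <;> linarith

lemma norm_le_max_of_mem_segment {x y c : E} (hc : c ∈ segment ℝ x y) :
    ‖c‖ ≤ max ‖x‖ ‖y‖ := by
  simpa using (convex_closedBall (0 : E) (max ‖x‖ ‖y‖)).segment_subset
    (by simp) (by simp) hc

end Geometry


lemma memN_iff {A : ASC} : memN A ↔ rhoSum A < ⊤ ∧ Antitone fun n => (A (n + 1)).2 :=
  and_congr_right fun _ =>
    ⟨fun h => antitone_nat_of_succ_le fun n => h (n + 1) le_add_self,
      fun h n hn => by
        obtain ⟨m, rfl⟩ := Nat.exists_eq_add_of_le' hn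
        exact h m.le_succ⟩

lemma PartiallyAbove.of_ball_subset {A B B' : ASC} (h : PartiallyAbove B A) (h0 : B' 0 = B 0)
    (hcov : ∀ m, 1 ≤ m → ∃ m', 1 ≤ m' ∧
      ball (ctr B m) (rad B m) ⊆ ball (ctr B' m') (rad B' m')) :
    PartiallyAbove B' A := by
  refine ⟨by simpa only [ctr, rad, h0] using h.1, fun n hn => ?_⟩
  rcases h.2 n hn with hout | ⟨m, hm, hsub⟩
  · exact Or.inl (by simpa only [ctr, rad, h0] using hout)
  · obtain ⟨m', hm', hsub'⟩ := hcov m hm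
    exact Or.inr ⟨m', hm', hsub.trans hsub'⟩

/-- Indices refer to the tail `n ↦ B (n + 1)`: for `K < L`, the discs `K + 1` and `L + 1` of `B`
are deleted and `x` becomes disc `j + 1`. -/
def replaceTwo (B : ASC) (K L j : ℕ) (x : ℂ × NNReal) : ASC
  | 0 => B 0
  | i + 1 => insertAt j x (fun i => B (skip L (skip K i) + 1)) i

section replaceTwo

variable {B : ASC} {K L j : ℕ} {x : ℂ × NNReal}

lemma tsum_replaceTwo (hKL : K < L) (F : ℂ × NNReal → ℝ≥0∞) :
    ∑' i, F (replaceTwo B K L j x (i + 1)) + F (B (K + 1)) + F (B (L + 1)) =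
      ∑' i, F (B (i + 1)) + F x := by
  simp only [replaceTwo, apply_insertAt F, tsum_insertAt]
  rw [tsum_eq_add_tsum_skip (fun i => F (B (i + 1))) L,
    tsum_eq_add_tsum_skip (fun i => F (B (skip L i + 1))) K, skip_of_lt hKL]
  simp only [Function.comp_def]
  ring

lemma exists_replaceTwo_eq (hKL : K < L) {m : ℕ} (hmK : m ≠ K) (hmL : m ≠ L) :
    ∃ i, replaceTwo B K L j x (i + 1) = B (m + 1) := by
  obtain ⟨m₁, rfl⟩ : m ∈ range (skip L) := by simpa [range_skip] using hmL
  obtain ⟨m₂, rfl⟩ : m₁ ∈ range (skip K) := by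
    rw [range_skip]
    rintro rfl
    exact hmK (skip_of_lt hKL)
  exact ⟨skip j m₂, insertAt_skip j x (fun i => B (skip L (skip K i) + 1)) m₂⟩

lemma exists_ball_subset_replaceTwo (hKL : K < L)
    (hK : ball (ctr B (K + 1)) (rad B (K + 1)) ⊆ ball x.1 x.2)
    (hL : ball (ctr B (L + 1)) (rad B (L + 1)) ⊆ ball x.1 x.2) {m : ℕ} (hm : 1 ≤ m) :
    ∃ m', 1 ≤ m' ∧ ball (ctr B m) (rad B m) ⊆
      ball (ctr (replaceTwo B K L j x) m') (rad (replaceTwo B K L j x) m') := by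
  obtain ⟨m, rfl⟩ := Nat.exists_eq_add_of_le' hm
  by_cases hmKL : m = K ∨ m = L
  · have hj : replaceTwo B K L j x (j + 1) = x :=
      insertAt_self j x fun i => B (skip L (skip K i) + 1)
    refine ⟨j + 1, le_add_self, ?_⟩
    simp only [ctr, rad, hj]
    rcases hmKL with rfl | rfl
    exacts [hK, hL]
  · push Not at hmKL
    obtain ⟨i, hi⟩ := exists_replaceTwo_eq (B := B) (j := j) (x := x) hKL hmKL.1 hmKL.2
    exact ⟨i + 1, le_add_self, by simp only [ctr, rad, hi, subset_rfl]⟩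

lemma exists_antitone_replaceTwo (hB : Antitone fun n => (B (n + 1)).2)
    (hx : (B (K + 1)).2 ≤ x.2) : ∃ j, Antitone fun n => (replaceTwo B K L j x (n + 1)).2 := by
  set g := fun i => (B (skip L (skip K i) + 1)).2
  have hskip : StrictMono fun i => skip L (skip K i) :=
    (skip_strictMono L).comp (skip_strictMono K)
  have hg : Antitone g := hB.comp_monotone hskip.monotone
  have hgK : g K ≤ x.2 := (hB hskip.le_apply).trans hx
  obtain ⟨j, hj⟩ := exists_antitone_insertAt hg ⟨K, hgK⟩
  refine ⟨j, fun a b hab => ?_⟩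
  simp only [replaceTwo, apply_insertAt Prod.snd]
  exact hj hab

lemma muSup_replaceTwo_le (hx : (‖x.1‖₊ : ℝ≥0∞) ≤ muSup B) :
    muSup (replaceTwo B K L j x) ≤ muSup B := by
  refine iSup_le fun i => ?_
  set g := fun i => B (skip L (skip K i) + 1)
  have hi : replaceTwo B K L j x (i + 1) ∈ insert x (range g) :=
    range_insertAt j x g ▸ mem_range_self i
  rcases hi with hi | ⟨i', hi⟩
  · rwa [hi]
  · rw [← hi]
    exact le_iSup (fun n => (‖(B (n + 1)).1‖₊ : ℝ≥0∞)) _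

end replaceTwo

lemma nnnorm_le_muSup_of_mem_segment {B : ASC} {k l : ℕ} {c : ℂ}
    (hc : c ∈ segment ℝ (ctr B (k + 1)) (ctr B (l + 1))) : (‖c‖₊ : ℝ≥0∞) ≤ muSup B := by
  have hc' : ‖c‖₊ ≤ max ‖(B (k + 1)).1‖₊ ‖(B (l + 1)).1‖₊ := norm_le_max_of_mem_segment hc
  refine (ENNReal.coe_le_coe.2 hc').trans ?_
  rw [ENNReal.coe_max]
  exact max_le (le_iSup (fun n => (‖(B (n + 1)).1‖₊ : ℝ≥0∞)) k)
    (le_iSup (fun n => (‖(B (n + 1)).1‖₊ : ℝ≥0∞)) l)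

lemma exists_merge_mem_Stilde {A B : ASC} (hB : B ∈ Stilde A) {k l : ℕ} (hk : 1 ≤ k)
    (hl : 1 ≤ l) (hkl : k ≠ l) {s : ℝ≥0} (hks : rad B k ≤ s) (hls : rad B l ≤ s)
    (hsum : (s : ℝ) ≤ rad B k + rad B l)
    (hdist : dist (ctr B k) (ctr B l) + rad B k + rad B l ≤ 2 * s) :
    ∃ B' ∈ Stilde A, B' 0 = B 0 ∧ ∀ F : ℝ≥0 → ℝ≥0∞,
      ∑' n, F (B' (n + 1)).2 + F (B k).2 + F (B l).2 = ∑' n, F (B (n + 1)).2 + F s := by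
  wlog hlt : k < l generalizing k l
  · obtain ⟨B', hB', h0, hF⟩ := this hl hk hkl.symm hls hks (by rwa [add_comm])
      (by rwa [dist_comm, add_right_comm]) (lt_of_le_of_ne (not_lt.mp hlt) hkl.symm)
    exact ⟨B', hB', h0, fun F => by rw [add_right_comm, hF]⟩
  obtain ⟨K, rfl⟩ := Nat.exists_eq_add_of_le' hk
  obtain ⟨L, rfl⟩ := Nat.exists_eq_add_of_le' hl
  obtain ⟨⟨hNB, hμB, hρB⟩, hpa⟩ := hB
  obtain ⟨hfin, hanti⟩ := memN_iff.1 hNB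
  obtain ⟨c, hc, hKc, hLc⟩ := exists_mem_segment_ball_subset_ball hks hls hdist
  obtain ⟨j, hj⟩ :=
    exists_antitone_replaceTwo (L := L) (x := (c, s)) hanti (NNReal.coe_le_coe.1 hks)
  have hF : ∀ F : ℝ≥0 → ℝ≥0∞, ∑' n, F (replaceTwo B K L j (c, s) (n + 1)).2
      + F (B (K + 1)).2 + F (B (L + 1)).2 = ∑' n, F (B (n + 1)).2 + F s :=
    fun F => tsum_replaceTwo (by omega) (F ∘ Prod.snd)
  have hρ : rhoSum (replaceTwo B K L j (c, s)) ≤ rhoSum B := by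
    refine (ENNReal.add_le_add_iff_right
      (by finiteness : ((B (K + 1)).2 + (B (L + 1)).2 : ℝ≥0∞) ≠ ⊤)).1 ?_
    have h := hF fun r => r
    beta_reduce at h
    rw [← add_assoc, rhoSum, rhoSum, h]
    gcongr
    exact_mod_cast hsum
  refine ⟨replaceTwo B K L j (c, s), ⟨⟨memN_iff.2 ⟨hρ.trans_lt hfin, hj⟩,
    (muSup_replaceTwo_le (nnnorm_le_muSup_of_mem_segment hc)).trans hμB, hρ.trans hρB⟩,
    hpa.of_ball_subset rfl fun m hm => exists_ball_subset_replaceTwo (by omega) hKc hLc hm⟩,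
    rfl, hF⟩

lemma delta1_lt_of_rhoSum_lt {B B' : ASC} (h0 : B' 0 = B 0) (h : rhoSum B' < rhoSum B) :
    delta1 B < delta1 B' := by
  rw [delta1, delta1, rad, rad, h0]
  exact EReal.sub_lt_sub_of_le_of_gt le_rfl (EReal.coe_ennreal_lt_coe_ennreal_iff.2 h)
    (EReal.coe_ne_top _) (EReal.coe_ne_bot _)

lemma delta2_lt_of_tsum_rpow_two_lt {B B' : ASC} (h0 : B' 0 = B 0)
    (h : ∑' n, ((B (n + 1)).2 : ℝ≥0∞) ^ (2 : ℝ) < ∑' n, ((B' (n + 1)).2 : ℝ≥0∞) ^ (2 : ℝ)) :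
    delta2 B' < delta2 B := by
  rw [delta2, delta2, deltaAlpha, deltaAlpha, h0]
  exact EReal.sub_lt_sub_of_le_of_gt le_rfl (EReal.coe_ennreal_lt_coe_ennreal_iff.2 h)
    (EReal.coe_ennreal_eq_top_iff.not.2 (by finiteness)) (EReal.coe_ennreal_ne_bot _)

lemma tsum_rpow_two_ne_top {B : ASC} (h : rhoSum B ≠ ⊤) :
    ∑' n, ((B (n + 1)).2 : ℝ≥0∞) ^ (2 : ℝ) ≠ ⊤ := by
  refine ne_top_of_le_ne_top (ENNReal.mul_ne_top h h) ?_
  rw [rhoSum, ← ENNReal.tsum_mul_right]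
  refine ENNReal.tsum_le_tsum fun n => ?_
  rw [ENNReal.rpow_two, sq]
  exact mul_le_mul_right (ENNReal.le_tsum n) _

lemma exists_mem_Stilde_delta1_lt {A B : ASC} (hB : B ∈ Stilde A) {k l : ℕ} (hk : k ∈ SIdx B)
    (hl : l ∈ SIdx B) (hkl : k ≠ l)
    (hopen : (ball (ctr B k) (rad B k) ∩ ball (ctr B l) (rad B l)).Nonempty) :
    ∃ B' ∈ Stilde A, delta1 B < delta1 B' := by
  have hd := dist_lt_add_of_nonempty_ball_inter_ball hopen
  -- the radius of the smallest disc containing both discs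
  set s : ℝ :=
    max (max (rad B k) (rad B l)) ((dist (ctr B k) (ctr B l) + rad B k + rad B l) / 2)
  have hks : rad B k ≤ s := (le_max_left _ _).trans (le_max_left _ _)
  have hls : rad B l ≤ s := (le_max_right _ _).trans (le_max_left _ _)
  have hdist : dist (ctr B k) (ctr B l) + rad B k + rad B l ≤ 2 * s := by
    have : (dist (ctr B k) (ctr B l) + rad B k + rad B l) / 2 ≤ s := le_max_right _ _
    linarith
  have hs : s < rad B k + rad B l :=
    max_lt (max_lt (by linarith [hl.2]) (by linarith [hk.2])) (by linarith)
  have hs₀ : 0 ≤ s := hk.2.le.trans hks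
  obtain ⟨B', hB', h0, hF⟩ := exists_merge_mem_Stilde hB hk.1 hl.1 hkl (s := s.toNNReal)
    (by rwa [Real.coe_toNNReal s hs₀]) (by rwa [Real.coe_toNNReal s hs₀])
    (by rw [Real.coe_toNNReal s hs₀]; exact hs.le) (by rwa [Real.coe_toNNReal s hs₀])
  refine ⟨B', hB', delta1_lt_of_rhoSum_lt h0 (lt_of_not_ge fun hle => ?_)⟩
  have h := hF fun r => r
  beta_reduce at h
  rw [← rhoSum, ← rhoSum, add_assoc] at h
  refine h.not_gt (ENNReal.add_lt_add_of_le_of_lt hB.1.1.1.ne hle ?_)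
  rw [← ENNReal.coe_add, ENNReal.coe_lt_coe, ← NNReal.coe_lt_coe, NNReal.coe_add,
    Real.coe_toNNReal s hs₀]
  exact hs

lemma exists_mem_Stilde_delta2_lt {A B : ASC} (hB : B ∈ Stilde A) {k l : ℕ} (hk : k ∈ SIdx B)
    (hl : l ∈ SIdx B) (hkl : k ≠ l)
    (hmeet : (closedBall (ctr B k) (rad B k) ∩ closedBall (ctr B l) (rad B l)).Nonempty)
    (hdisj : ball (ctr B k) (rad B k) ∩ ball (ctr B l) (rad B l) = ∅) :
    ∃ B' ∈ Stilde A, delta1 B' = delta1 B ∧ delta2 B' < delta2 B := by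
  have hd : dist (ctr B k) (ctr B l) = rad B k + rad B l :=
    (dist_le_add_of_nonempty_closedBall_inter_closedBall hmeet).antisymm
      ((disjoint_ball_ball_iff hk.2 hl.2).1 (disjoint_iff_inter_eq_empty.2 hdisj))
  have hs : (((B k).2 + (B l).2 : ℝ≥0) : ℝ) = rad B k + rad B l := NNReal.coe_add _ _
  obtain ⟨B', hB', h0, hF⟩ :=
    exists_merge_mem_Stilde hB hk.1 hl.1 hkl (s := (B k).2 + (B l).2) (by simp [rad])
      (by simp [rad]) hs.le (by rw [hs, hd]; linarith)
  refine ⟨B', hB', ?_, delta2_lt_of_tsum_rpow_two_lt h0 ?_⟩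
  · have h := hF fun r => r
    beta_reduce at h
    rw [← rhoSum, ← rhoSum, add_assoc, ENNReal.coe_add] at h
    rw [delta1, delta1, rad, rad, h0, (ENNReal.add_left_inj (by finiteness)).1 h]
  · have hsq : ((B k).2 : ℝ≥0∞) ^ (2 : ℝ) + ((B l).2 : ℝ≥0∞) ^ (2 : ℝ) <
        (((B k).2 + (B l).2 : ℝ≥0) : ℝ≥0∞) ^ (2 : ℝ) := by
      simp only [ENNReal.rpow_two]
      norm_cast
      rw [← NNReal.coe_lt_coe]
      have hkl₀ := mul_pos hk.2 hl.2
      rw [rad, rad] at hkl₀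
      push_cast
      nlinarith
    refine lt_of_not_ge fun hle => (hF fun r => (r : ℝ≥0∞) ^ (2 : ℝ)).not_lt ?_
    calc _ ≤ ∑' n, ((B (n + 1)).2 : ℝ≥0∞) ^ (2 : ℝ) + ((B k).2 : ℝ≥0∞) ^ (2 : ℝ)
          + ((B l).2 : ℝ≥0∞) ^ (2 : ℝ) := by gcongr
      _ < _ := by
        rw [add_assoc]
        exact ENNReal.add_lt_add_left (tsum_rpow_two_ne_top hB.1.1.1.ne) hsq

theorem stmt7_general (A : ASC)
    (B : ASC) (hB : B ∈ Stilde A) (k l : ℕ) (hk : k ∈ SIdx B) (hl : l ∈ SIdx B)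
    (hkl : k ≠ l)
    (hmeet : (closedBall (ctr B k) (rad B k) ∩ closedBall (ctr B l) (rad B l)).Nonempty) :
    ((ball (ctr B k) (rad B k) ∩ ball (ctr B l) (rad B l)).Nonempty →
      ∃ B' ∈ Stilde A, delta1 B < delta1 B') ∧
    (ball (ctr B k) (rad B k) ∩ ball (ctr B l) (rad B l) = ∅ →
      ∃ B' ∈ Stilde A, delta1 B' = delta1 B ∧ delta2 B' < delta2 B) :=
  ⟨exists_mem_Stilde_delta1_lt hB hk hl hkl, exists_mem_Stilde_delta2_lt hB hk hl hkl hmeet⟩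

/-- Lemma 4.7(a): safe replacement for two intersecting closed disks. -/
theorem stmt7 (A : ASC) (hN : memN A) (hrf : RedundancyFree A) (hd : 0 < delta1 A)
    (B : ASC) (hB : B ∈ Stilde A) (k l : ℕ) (hk : k ∈ SIdx B) (hl : l ∈ SIdx B)
    (hkl : k ≠ l)
    (hmeet : (closedBall (ctr B k) (rad B k) ∩ closedBall (ctr B l) (rad B l)).Nonempty) :
    ((ball (ctr B k) (rad B k) ∩ ball (ctr B l) (rad B l)).Nonempty →
      ∃ B' ∈ Stilde A, delta1 B < delta1 B') ∧
    (ball (ctr B k) (rad B k) ∩ ball (ctr B l) (rad B l) = ∅ →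
      ∃ B' ∈ Stilde A, delta1 B' = delta1 B ∧ delta2 B' < delta2 B) :=
  stmt7_general A B hB k l hk hl hkl hmeet

end
end

section
/- Let A ∈ N be a redundancy-free abstract Swiss cheese with δ₁(A) > 0, set M = μ(A), R = ρ(A), and let S̃ be the set of all B ∈ N(M,R) partially above A. Let B = ((b_n, s_n)) ∈ S̃ and suppose k ∈ S_B with s_k < s_0 satisfies B̄(b_k, s_k) ⊄ B(b_0, s_0). If B(b_k, s_k) ⊄ B(b_0, s_0), then there exists B' ∈ S̃ with δ₁(B') > δ₁(B); otherwise there exists B' ∈ S̃ with δ₁(B') = δ₁(B) and δ₂(B') < δ₂(B). -/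
open Metric Set Filter Topology ENNReal

noncomputable section

lemma stmt8_toE (x : ℝ≥0∞) (hx : x ≠ ⊤) : (x : EReal) = ((x.toReal : ℝ) : EReal) := by
  lift x to NNReal using hx
  norm_cast

lemma stmt8_tsum_delete (f : ℕ → ℝ≥0∞) (j : ℕ) :
    (∑' n, if n < j then f n else f (n + 1)) + f j = ∑' n, f n := by
  have hinj : Function.Injective (fun n : ℕ => if n < j then n else n + 1) := by
    have : StrictMono (fun n : ℕ => if n < j then n else n + 1) := by
      intro a b hab
      by_cases ha : a < j <;> by_cases hb : b < j <;>
        simp only [ha, hb, if_true, if_false] <;> omega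
    exact this.injective
  have hsupp : Function.support (fun m => if m = j then 0 else f m) ⊆
      Set.range (fun n : ℕ => if n < j then n else n + 1) := by
    intro m hm
    simp only [Function.mem_support, ne_eq, ite_eq_left_iff, not_forall] at hm
    obtain ⟨hmj, -⟩ := hm
    refine ⟨if m < j then m else m - 1, ?_⟩
    by_cases h : m < j <;> simp only [h, if_true, if_false] <;> split <;> omega
  have h2 : (∑' n, if n < j then f n else f (n + 1)) =
      ∑' n, if n = j then 0 else f n := by
    rw [← hinj.tsum_eq hsupp]
    congr 1
    funext n
    by_cases h : n < j
    · simp only [h, if_true]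
      rw [if_neg (by omega)]
    · simp only [h, if_false]
      rw [if_neg (by omega)]
  rw [h2, add_comm, ENNReal.tsum_eq_add_tsum_ite (f := f) j]
  congr 1
  exact tsum_congr fun n => by by_cases h : n = j <;> simp [h]

/-- Lemma 4.7(b): safe replacement for a disk escaping the closed disk. -/
theorem stmt8 (A : ASC) (hN : memN A) (hrf : RedundancyFree A) (hd : 0 < delta1 A)
    (B : ASC) (hB : B ∈ Stilde A) (k : ℕ) (hk : k ∈ SIdx B)
    (hks : rad B k < rad B 0)
    (hnot : ¬ closedBall (ctr B k) (rad B k) ⊆ ball (ctr B 0) (rad B 0)) :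
    ((¬ ball (ctr B k) (rad B k) ⊆ ball (ctr B 0) (rad B 0)) →
      ∃ B' ∈ Stilde A, delta1 B < delta1 B') ∧
    (ball (ctr B k) (rad B k) ⊆ ball (ctr B 0) (rad B 0) →
      ∃ B' ∈ Stilde A, delta1 B' = delta1 B ∧ delta2 B' < delta2 B) := by
  obtain ⟨⟨⟨hBfin, hBmono⟩, hBmu, hBrho⟩, hB0sub, hBpa⟩ := hB
  obtain ⟨hk1, hkpos⟩ := hk
  set s0 : ℝ := rad B 0 with hs0
  set s : ℝ := rad B k with hsdef
  set b0 : ℂ := ctr B 0 with hb0def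
  set bk : ℂ := ctr B k with hbkdef
  set t : ℝ := dist bk b0 with htdef
  have hs : 0 < s := hkpos
  have hss0 : s < s0 := hks
  have hts : s0 ≤ s + t := by
    by_contra h
    push_neg at h
    exact hnot (closedBall_subset_ball' (by linarith))
  have ht0 : 0 < t := by linarith
  set c : ℝ := max 0 ((s + s0 - t) / 2) with hcdef
  have hc0 : 0 ≤ c := le_max_left _ _
  have hcs : c ≤ s := max_le hs.le (by linarith)
  have hc2 : s + s0 - t ≤ 2 * c := by
    have := le_max_right (0 : ℝ) ((s + s0 - t) / 2); linarith
  set u : ℂ := (t : ℂ)⁻¹ * (bk - b0) with hudef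
  have htC : (t : ℂ) ≠ 0 := by exact_mod_cast ht0.ne'
  have hbkb0 : bk - b0 = (t : ℂ) * u := by
    rw [hudef]; field_simp
  have hnu : ‖u‖ = 1 := by
    rw [hudef, norm_mul, norm_inv, Complex.norm_real, Real.norm_eq_abs, abs_of_pos ht0,
      ← dist_eq_norm, ← htdef, inv_mul_cancel₀ ht0.ne']
  set b0' : ℂ := b0 - (c : ℂ) * u with hb0'def
  have hdb0 : dist b0' b0 = c := by
    have h1 : b0' - b0 = -((c : ℂ) * u) := by rw [hb0'def]; ring
    rw [dist_eq_norm, h1, norm_neg, norm_mul, hnu, mul_one, Complex.norm_real,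
      Real.norm_eq_abs, abs_of_nonneg hc0]
  have hdbk : dist b0' bk = t + c := by
    have h1 : b0' - bk = -(((t + c : ℝ) : ℂ)) * u := by
      rw [hb0'def]; push_cast; linear_combination (-1 : ℂ) * hbkb0
    rw [dist_eq_norm, h1, norm_mul, norm_neg, Complex.norm_real, Real.norm_eq_abs, hnu,
      mul_one, abs_of_pos (by linarith)]
  set B' : ASC := (fun n => if n = 0 then (b0', Real.toNNReal (s0 - c))
    else if n < k then B n else B (n + 1)) with hB'def
  have hB'0 : B' 0 = (b0', Real.toNNReal (s0 - c)) := by simp [hB'def]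
  have hctr0 : ctr B' 0 = b0' := by
    rw [show ctr B' 0 = (B' 0).1 from rfl, hB'0]
  have hrad0 : rad B' 0 = s0 - c := by
    rw [show rad B' 0 = ((B' 0).2 : ℝ) from rfl, hB'0]
    exact Real.coe_toNNReal _ (by linarith)
  have hsub : closedBall b0' (s0 - c) ⊆ closedBall b0 s0 :=
    closedBall_subset_closedBall' (by rw [hdb0]; linarith)
  have hdisj : ∀ x, x ∈ ball bk s → x ∉ closedBall b0' (s0 - c) := by
    intro x hx hx'
    rw [mem_ball] at hx
    rw [mem_closedBall, dist_comm] at hx'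
    have htri : dist b0' bk ≤ dist b0' x + dist x bk := dist_triangle _ _ _
    rw [hdbk] at htri
    linarith
  have key : ∀ g : ℂ × NNReal → ℝ≥0∞,
      (∑' n, g (B' (n + 1))) + g (B k) = ∑' n, g (B (n + 1)) := by
    intro g
    have hj : ∀ n : ℕ, g (B' (n + 1)) =
        if n < k - 1 then g (B (n + 1)) else g (B (n + 1 + 1)) := by
      intro n
      by_cases h : n + 1 < k
      · have e : B' (n + 1) = B (n + 1) := by
          simp only [hB'def]; rw [if_neg (Nat.succ_ne_zero n), if_pos h]
        rw [e, if_pos (by omega)]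
      · have e : B' (n + 1) = B (n + 1 + 1) := by
          simp only [hB'def]; rw [if_neg (Nat.succ_ne_zero n), if_neg h]
        rw [e, if_neg (by omega)]
    rw [tsum_congr hj]
    have h := stmt8_tsum_delete (fun m => g (B (m + 1))) (k - 1)
    have ek : k - 1 + 1 = k := by omega
    simpa only [ek] using h
  have hρ : rhoSum B' + ((B k).2 : ℝ≥0∞) = rhoSum B := key fun p => ((p.2 : ℝ≥0∞))
  have hρ'le : rhoSum B' ≤ rhoSum B := by rw [← hρ]; exact le_self_add
  have hρ'fin : rhoSum B' ≠ ⊤ := (lt_of_le_of_lt hρ'le hBfin).ne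
  have hmono' : ∀ n : ℕ, 1 ≤ n → (B' (n + 1)).2 ≤ (B' n).2 := by
    intro n hn
    have en : B' n = if n < k then B n else B (n + 1) := by
      simp only [hB'def]; rw [if_neg (by omega)]
    have en1 : B' (n + 1) = if n + 1 < k then B (n + 1) else B (n + 1 + 1) := by
      simp only [hB'def]; rw [if_neg (by omega)]
    rw [en, en1]
    split_ifs with h1 h2 h2
    · exact hBmono n hn
    · exact absurd h1 (by omega)
    · exact le_trans (hBmono (n + 1) (by omega)) (hBmono n hn)
    · exact hBmono (n + 1) (by omega)
  have hmu' : muSup B' ≤ muSup A := by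
    refine le_trans (iSup_le fun n => ?_) hBmu
    by_cases h : n + 1 < k
    · have e : B' (n + 1) = B (n + 1) := by
        simp only [hB'def]; rw [if_neg (by omega), if_pos h]
      rw [e]
      exact le_iSup (fun m => (‖(B (m + 1)).1‖₊ : ℝ≥0∞)) n
    · have e : B' (n + 1) = B (n + 1 + 1) := by
        simp only [hB'def]; rw [if_neg (by omega), if_neg h]
      rw [e]
      exact le_iSup (fun m => (‖(B (m + 1)).1‖₊ : ℝ≥0∞)) (n + 1)
  have hpa' : PartiallyAbove B' A := by
    constructor
    · rw [hctr0, hrad0]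
      exact hsub.trans hB0sub
    · intro n hn
      rcases hBpa n hn with h | ⟨m, hm1, hmsub⟩
      · left
        rw [hctr0, hrad0]
        exact h.trans (compl_subset_compl.mpr hsub)
      · by_cases hmk : m = k
        · left
          rw [hctr0, hrad0]
          intro x hx
          exact hdisj x (by rw [hmk] at hmsub; exact hmsub hx)
        · right
          refine ⟨if m < k then m else m - 1, by split <;> omega, ?_⟩
          have e : B' (if m < k then m else m - 1) = B m := by
            simp only [hB'def]
            by_cases h2 : m < k
            · rw [if_pos h2, if_neg (by omega), if_pos h2]
            · rw [if_neg h2, if_neg (by omega), if_neg (by omega)]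
              congr 1
              omega
          have ec : ctr B' (if m < k then m else m - 1) = ctr B m := by
            unfold ctr; rw [e]
          have er : rad B' (if m < k then m else m - 1) = rad B m := by
            unfold rad; rw [e]
          rw [ec, er]
          exact hmsub
  have hmem : B' ∈ Stilde A :=
    ⟨⟨⟨lt_of_le_of_lt hρ'le hBfin, hmono'⟩, hmu', le_trans hρ'le hBrho⟩, hpa'⟩
  have hρR : (rhoSum B').toReal = (rhoSum B).toReal - s := by
    have h2 := congrArg ENNReal.toReal hρ
    rw [ENNReal.toReal_add hρ'fin ENNReal.coe_ne_top, ENNReal.coe_toReal] at h2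
    have h3 : ((B k).2 : ℝ) = s := rfl
    rw [h3] at h2
    linarith
  have ed1B : delta1 B = ((s0 - (rhoSum B).toReal : ℝ) : EReal) := by
    unfold delta1
    rw [← hs0, stmt8_toE _ hBfin.ne, ← EReal.coe_sub]
  have ed1B' : delta1 B' = ((s0 - c - ((rhoSum B).toReal - s) : ℝ) : EReal) := by
    unfold delta1
    rw [hrad0, stmt8_toE _ hρ'fin, hρR, ← EReal.coe_sub]
  constructor
  · intro hb
    have hstrict : s0 < s + t := by
      by_contra h
      push_neg at h
      exact hb (ball_subset_ball' (by linarith))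
    have hcls : c < s := max_lt hs (by linarith)
    refine ⟨B', hmem, ?_⟩
    rw [ed1B, ed1B']
    exact_mod_cast (by linarith :
      s0 - (rhoSum B).toReal < s0 - c - ((rhoSum B).toReal - s))
  · intro hb
    have hle : s + t ≤ s0 := by
      by_contra h
      push_neg at h
      set p : ℝ := (s + max (s0 - t) 0) / 2 with hpdef
      have hmax0 : 0 ≤ max (s0 - t) 0 := le_max_right _ _
      have hp0 : 0 ≤ p := by rw [hpdef]; linarith
      have hps : p < s := by
        have hx : max (s0 - t) 0 < s := max_lt (by linarith) hs
        rw [hpdef]; linarith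
      have hpt : s0 ≤ t + p := by
        rcases le_or_gt (s0 - t) 0 with h' | h'
        · linarith
        · have he : p = (s + (s0 - t)) / 2 := by rw [hpdef, max_eq_left h'.le]
          linarith
      set z : ℂ := bk + (p : ℂ) * u with hzdef
      have hz1 : z ∈ ball bk s := by
        rw [mem_ball, dist_eq_norm]
        have h1 : z - bk = (p : ℂ) * u := by rw [hzdef]; ring
        rw [h1, norm_mul, hnu, mul_one, Complex.norm_real, Real.norm_eq_abs,
          abs_of_nonneg hp0]
        exact hps
      have hz2 : z ∉ ball b0 s0 := by
        rw [mem_ball, dist_eq_norm]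
        have h1 : z - b0 = (((t + p : ℝ)) : ℂ) * u := by
          rw [hzdef]; push_cast; linear_combination hbkb0
        rw [h1, norm_mul, hnu, mul_one, Complex.norm_real, Real.norm_eq_abs,
          abs_of_nonneg (by linarith)]
        linarith
      exact hz2 (hb hz1)
    have hceq : c = s := by
      rw [hcdef, show (s + s0 - t) / 2 = s by linarith]
      exact max_eq_right hs.le
    have hσ : (∑' n, ((B' (n + 1)).2 : ℝ≥0∞) ^ (2 : ℝ)) + ((B k).2 : ℝ≥0∞) ^ (2 : ℝ)
        = ∑' n, ((B (n + 1)).2 : ℝ≥0∞) ^ (2 : ℝ) :=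
      key fun p => ((p.2 : ℝ≥0∞)) ^ (2 : ℝ)
    have monoB1 : ∀ m : ℕ, (B (m + 1)).2 ≤ (B 1).2 := by
      intro m
      induction m with
      | zero => exact le_refl _
      | succ i ih => exact le_trans (hBmono (i + 1) (by omega)) ih
    have hσfin : (∑' n, ((B (n + 1)).2 : ℝ≥0∞) ^ (2 : ℝ)) ≠ ⊤ := by
      have hterm : ∀ n : ℕ, ((B (n + 1)).2 : ℝ≥0∞) ^ (2 : ℝ) ≤
          ((B 1).2 : ℝ≥0∞) * ((B (n + 1)).2 : ℝ≥0∞) := by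
        intro n
        rw [show ((2 : ℝ)) = ((2 : ℕ) : ℝ) by norm_num, ENNReal.rpow_natCast, pow_two]
        exact mul_le_mul_left (by exact_mod_cast monoB1 n) _
      have hle2 : (∑' n, ((B (n + 1)).2 : ℝ≥0∞) ^ (2 : ℝ)) ≤
          ((B 1).2 : ℝ≥0∞) * rhoSum B :=
        le_trans (ENNReal.tsum_le_tsum hterm) (le_of_eq ENNReal.tsum_mul_left)
      exact ne_top_of_le_ne_top (ENNReal.mul_ne_top ENNReal.coe_ne_top hBfin.ne) hle2
    have hσ'le : (∑' n, ((B' (n + 1)).2 : ℝ≥0∞) ^ (2 : ℝ)) ≤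
        ∑' n, ((B (n + 1)).2 : ℝ≥0∞) ^ (2 : ℝ) := by
      rw [← hσ]; exact le_self_add
    have hσ'fin : (∑' n, ((B' (n + 1)).2 : ℝ≥0∞) ^ (2 : ℝ)) ≠ ⊤ :=
      ne_top_of_le_ne_top hσfin hσ'le
    have hrk2 : (((B k).2 : ℝ≥0∞) ^ (2 : ℝ)).toReal = s ^ 2 := by
      rw [← ENNReal.toReal_rpow, ENNReal.coe_toReal,
        show ((2 : ℝ)) = ((2 : ℕ) : ℝ) by norm_num, Real.rpow_natCast]
      rfl
    have hσR : (∑' n, ((B' (n + 1)).2 : ℝ≥0∞) ^ (2 : ℝ)).toReal =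
        (∑' n, ((B (n + 1)).2 : ℝ≥0∞) ^ (2 : ℝ)).toReal - s ^ 2 := by
      have h2 := congrArg ENNReal.toReal hσ
      rw [ENNReal.toReal_add hσ'fin
        (ENNReal.rpow_ne_top_of_nonneg (by norm_num) ENNReal.coe_ne_top), hrk2] at h2
      linarith
    have hX : (((B 0).2 : ℝ≥0∞) ^ (2 : ℝ)).toReal = s0 ^ 2 := by
      rw [← ENNReal.toReal_rpow, ENNReal.coe_toReal,
        show ((2 : ℝ)) = ((2 : ℕ) : ℝ) by norm_num, Real.rpow_natCast]
      rfl
    have hX' : (((B' 0).2 : ℝ≥0∞) ^ (2 : ℝ)).toReal = (s0 - c) ^ 2 := by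
      rw [← ENNReal.toReal_rpow, ENNReal.coe_toReal,
        show ((B' 0).2 : ℝ) = rad B' 0 from rfl, hrad0,
        show ((2 : ℝ)) = ((2 : ℕ) : ℝ) by norm_num, Real.rpow_natCast]
    have ed2B : delta2 B =
        ((s0 ^ 2 - (∑' n, ((B (n + 1)).2 : ℝ≥0∞) ^ (2 : ℝ)).toReal : ℝ) : EReal) := by
      unfold delta2 deltaAlpha
      rw [stmt8_toE _ (ENNReal.rpow_ne_top_of_nonneg (by norm_num) ENNReal.coe_ne_top),
        stmt8_toE _ hσfin, hX, ← EReal.coe_sub]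
    have ed2B' : delta2 B' =
        (((s0 - c) ^ 2 - ((∑' n, ((B (n + 1)).2 : ℝ≥0∞) ^ (2 : ℝ)).toReal - s ^ 2) : ℝ)
          : EReal) := by
      unfold delta2 deltaAlpha
      rw [stmt8_toE _ (ENNReal.rpow_ne_top_of_nonneg (by norm_num) ENNReal.coe_ne_top),
        stmt8_toE _ hσ'fin, hX', hσR, ← EReal.coe_sub]
    refine ⟨B', hmem, ?_, ?_⟩
    · rw [ed1B, ed1B', hceq]
      exact_mod_cast (by ring :
        s0 - s - ((rhoSum B).toReal - s) = s0 - (rhoSum B).toReal)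
    · rw [ed2B, ed2B', hceq]
      have hgoal : (s0 - s) ^ 2 -
          ((∑' n, ((B (n + 1)).2 : ℝ≥0∞) ^ (2 : ℝ)).toReal - s ^ 2) <
          s0 ^ 2 - (∑' n, ((B (n + 1)).2 : ℝ≥0∞) ^ (2 : ℝ)).toReal := by
        nlinarith [mul_pos hs (sub_pos.mpr hss0)]
      exact_mod_cast hgoal

end
end
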